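/- arXiv:math/0601479 — 6 statements merged into one kernel-verified Lean document; each statement's English description precedes it below -/
import Mathlib

section
/- Let $\mathbb{F} \subseteq \mathbb{G}$ be an extension of finite fields, and for $c \in \mathbb{F}$ let $V(c) = \{v \in \mathbb{G} \mid \mathrm{Tr}_{\mathbb{G}/\mathbb{F}}(v) = c\}$. Then for every $c \in \mathbb{F}^\times$: $c^{-1}\prod_{v \in V(c)} v = \prod_{v \in V(1)} v = 1 = \prod_{0 \neq v \in V(0)} v$. -/
open Finset
open Polynomial


theorem tf (F G : Type*) [Field F] [Field G] [Fintype F] [Fintype G] [Algebra F G] (x : G) :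
    algebraMap F G (Algebra.trace F G x) =
      ∑ i ∈ range (Module.finrank F G), x ^ (Fintype.card F) ^ i := by
  classical
  obtain ⟨p, hp⟩ := CharP.exists F
  haveI : CharP F p := hp
  haveI : CharP G p := charP_of_injective_algebraMap' F p
  obtain ⟨f, hpprime, hcard⟩ := FiniteField.card F p
  haveI : Fact p.Prime := ⟨hpprime⟩
  set q := Fintype.card F with hqdef
  set n := Module.finrank F G with hn
  have hq1 : 1 < q := Fintype.one_lt_card
  have hGcard : Fintype.card G = q ^ n := Module.card_eq_pow_finrank
  have hcomm : ∀ a : F, (iterateFrobenius G p f) (algebraMap F G a) = algebraMap F G a := by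
    intro a
    rw [iterateFrobenius_def, ← hcard, ← map_pow, FiniteField.pow_card]
  let φ : G →ₐ[F] G := { toRingHom := iterateFrobenius G p f, commutes' := hcomm }
  let e : G ≃ₐ[F] G := AlgEquiv.ofBijective φ
    ((Finite.injective_iff_bijective).mp (RingHom.injective (φ : G →+* G)))
  have he : ∀ (i : ℕ) (y : G), (e ^ i) y = y ^ q ^ i := by
    intro i
    induction i with
    | zero => intro y; simp
    | succ i ih =>
      intro y
      have h1 : (e ^ (i+1)) y = (e ^ i) (e y) := by rw [pow_succ]; rfl
      have h2 : e y = y ^ q := by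
        show iterateFrobenius G p f y = y ^ q
        rw [iterateFrobenius_def, hcard]
      rw [h1, ih, h2, ← pow_mul, pow_succ, mul_comm (q^i) q, pow_mul]
  have hbij : Function.Bijective (fun i : Fin n => e ^ (i : ℕ)) := by
    have hn0 : 0 < n := hn ▸ Module.finrank_pos
    have hinj : Function.Injective (fun i : Fin n => e ^ (i : ℕ)) := by
      intro i j hij
      rcases Nat.lt_or_ge n 2 with h2 | h2
      · have : n = 1 := by omega
        rw [show n = Module.finrank F G from rfl] at this
        revert i j
        rw [← hn] at *
        rw [this]
        intro i j _
        exact Subsingleton.elim i j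
      · obtain ⟨ξ, hξ⟩ := IsCyclic.exists_generator (α := Gˣ)
        have hord : orderOf ξ = q ^ n - 1 := by
          rw [orderOf_eq_card_of_forall_mem_zpowers hξ, Nat.card_eq_fintype_card,
            Fintype.card_units, hGcard]
        have hx : (ξ : G) ^ q ^ (i : ℕ) = (ξ : G) ^ q ^ (j : ℕ) := by
          have := congrArg (fun σ : G ≃ₐ[F] G => σ (ξ : G)) hij
          simpa only [he] using this
        have hu : ξ ^ q ^ (i : ℕ) = ξ ^ q ^ (j : ℕ) := by
          ext; push_cast; exact hx
        rw [pow_eq_pow_iff_modEq, hord] at hu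
        have hbound : ∀ k : Fin n, q ^ (k : ℕ) < q ^ n - 1 := by
          intro k
          have h1 : q ^ (k : ℕ) ≤ q ^ (n - 1) := Nat.pow_le_pow_right (by omega) (by omega)
          have h2' : 2 * q ^ (n - 1) ≤ q * q ^ (n - 1) := Nat.mul_le_mul_right _ hq1
          have h3 : q * q ^ (n - 1) = q ^ n := by rw [← pow_succ']; congr 1; omega
          have h4 : 2 ≤ q ^ (n - 1) := by
            have : q ^ 1 ≤ q ^ (n - 1) := Nat.pow_le_pow_right (by omega) (by omega)
            rw [pow_one] at this; omega
          omega
        have := Nat.ModEq.eq_of_lt_of_lt hu (hbound i) (hbound j)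
        exact Fin.ext (Nat.pow_right_injective hq1 this)
    rw [Fintype.bijective_iff_injective_and_card]
    exact ⟨hinj, by rw [Fintype.card_fin, ← Nat.card_eq_fintype_card, IsGalois.card_aut_eq_finrank]⟩
  rw [trace_eq_sum_automorphisms]
  rw [← Fintype.sum_bijective _ hbij _ (fun σ : G ≃ₐ[F] G => σ x) (fun i => rfl)]
  rw [Fin.sum_univ_eq_sum_range (fun i => (e ^ i) x) n]
  exact Finset.sum_congr rfl fun i _ => he i x


theorem aux_monic {G : Type*} [Field G] (R : Polynomial G) (m : ℕ) (h : R = 0 ∨ R.natDegree < m) :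
    (X ^ m + R).Monic ∧ (X ^ m + R).natDegree = m := by
  have hdeg : R.degree < (m : WithBot ℕ) := by
    rcases h with rfl | h
    · rw [Polynomial.degree_zero]; exact WithBot.bot_lt_coe m
    · rcases eq_or_ne R 0 with rfl | h0
      · rw [Polynomial.degree_zero]; exact WithBot.bot_lt_coe m
      · exact (Polynomial.natDegree_lt_iff_degree_lt h0).1 h
  have hmon : (X ^ m + R).Monic := Polynomial.monic_X_pow_add hdeg
  refine ⟨hmon, ?_⟩
  have : (X ^ m + R).degree = (m : WithBot ℕ) := by
    rw [Polynomial.degree_add_eq_left_of_degree_lt (by rwa [Polynomial.degree_X_pow]),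
      Polynomial.degree_X_pow]
  exact Polynomial.natDegree_eq_of_degree_eq_some this

theorem key_eval {G : Type*} [Field G] [DecidableEq G] (S : Finset G) (P : Polynomial G)
    (hm : P.Monic) (hd : P.natDegree = S.card) (hr : ∀ v ∈ S, P.eval v = 0) :
    P.eval 0 = (-1) ^ S.card * ∏ v ∈ S, v := by
  have hsub : S.val ≤ P.roots := by
    rw [Finset.val_le_iff_val_subset]
    intro v hv
    rw [Polynomial.mem_roots hm.ne_zero]
    exact hr v (by simpa using hv)
  have hcard : Multiset.card P.roots ≤ Multiset.card S.val := by
    rw [← Finset.card_def]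
    exact hd ▸ P.card_roots'
  have heq : S.val = P.roots := Multiset.eq_of_le_of_card_le hsub hcard
  have hP := Polynomial.prod_multiset_X_sub_C_of_monic_of_roots_card_eq hm
    (by rw [← heq, ← Finset.card_def]; exact hd.symm)
  conv_lhs => rw [← hP]
  rw [Polynomial.eval_multiset_prod, ← heq, Multiset.map_map]
  have h2 : ((S.val.map fun a : G => Polynomial.eval 0 (X - C a))).prod = ∏ v ∈ S, (0 - v) := by
    rw [Finset.prod_eq_multiset_prod]
    simp
  rw [show ((fun (p : Polynomial G) => Polynomial.eval 0 p) ∘ fun a : G => X - C a)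
      = fun a : G => Polynomial.eval 0 (X - C a) from rfl, h2]
  simp only [zero_sub]
  rw [show (fun v : G => -v) = fun v : G => (-1) * v from by funext v; ring]
  rw [Finset.prod_mul_distrib, Finset.prod_const]

/-- For an extension `F ⊆ G` of finite fields with trace fibers
`V(c) = {v ∈ G | Tr_{G/F}(v) = c}`, for every nonzero `c ∈ F` we have
`c⁻¹ ∏_{v ∈ V(c)} v = ∏_{v ∈ V(1)} v = 1 = ∏_{0 ≠ v ∈ V(0)} v`. -/
theorem stmt2 (F G : Type*) [Field F] [Field G] [Fintype F] [Fintype G]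
    [Algebra F G] [DecidableEq F] [DecidableEq G]
    (c : F) (hc : c ≠ 0) :
    (algebraMap F G c)⁻¹ *
        ∏ v ∈ univ.filter (fun v : G => Algebra.trace F G v = c), v =
      ∏ v ∈ univ.filter (fun v : G => Algebra.trace F G v = 1), v ∧
    (∏ v ∈ univ.filter (fun v : G => Algebra.trace F G v = 1), v) = 1 ∧
    (1 : G) = ∏ v ∈ univ.filter (fun v : G => Algebra.trace F G v = 0 ∧ v ≠ 0), v := by
  classical
  set q := Fintype.card F with hqdef
  set n := Module.finrank F G with hndef
  have hq1 : 1 < q := Fintype.one_lt_card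
  have hn0 : 0 < n := Module.finrank_pos
  obtain ⟨k, hk⟩ : ∃ k, n = k + 1 := ⟨n - 1, by omega⟩
  set m := q ^ k with hmdef
  have hm1 : 1 ≤ m := Nat.one_le_pow _ _ (by omega)
  have hGcard : Fintype.card G = q ^ n := Module.card_eq_pow_finrank
  have hqm : q * m = q ^ n := by rw [hmdef, hk, pow_succ']
  have htf : ∀ x : G, algebraMap F G (Algebra.trace F G x) = ∑ i ∈ range n, x ^ q ^ i :=
    fun x => tf F G x
  have hqi1 : ∀ i : ℕ, 1 ≤ q ^ i := fun i => Nat.one_le_pow _ _ (by omega)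
  -- the polynomials for the fibers
  set P : F → Polynomial G := fun a => X ^ m +
    ((∑ i ∈ range k, (X : Polynomial G) ^ q ^ i) - C (algebraMap F G a)) with hPdef
  have hPeq : ∀ a : F, P a = (∑ i ∈ range n, (X : Polynomial G) ^ q ^ i) - C (algebraMap F G a) := by
    intro a
    rw [hPdef, hk, Finset.sum_range_succ]
    ring
  have hPmonic : ∀ a : F, (P a).Monic ∧ (P a).natDegree = m := by
    intro a
    refine aux_monic _ m (Or.inr ?_)
    refine lt_of_le_of_lt (Polynomial.natDegree_sub_le _ _) ?_
    rw [Polynomial.natDegree_C]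
    have : ((∑ i ∈ range k, (X : Polynomial G) ^ q ^ i)).natDegree ≤ m - 1 := by
      apply Polynomial.natDegree_sum_le_of_forall_le
      intro i hi
      rw [Polynomial.natDegree_X_pow]
      have : q ^ i < q ^ k := Nat.pow_lt_pow_right hq1 (Finset.mem_range.1 hi)
      omega
    omega
  have hProot : ∀ (a : F) (v : G), Algebra.trace F G v = a → (P a).eval v = 0 := by
    intro a v hv
    rw [hPeq, Polynomial.eval_sub, Polynomial.eval_C, Polynomial.eval_finset_sum]
    simp only [Polynomial.eval_pow, Polynomial.eval_X]
    rw [← htf, hv, sub_self]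
  -- fiber cardinalities
  have hfiblem : ∀ a : F, (univ.filter fun v : G => Algebra.trace F G v = a).card ≤ m := by
    intro a
    have : (univ.filter fun v : G => Algebra.trace F G v = a).val ⊆ (P a).roots := by
      intro v hv
      rw [Polynomial.mem_roots (hPmonic a).1.ne_zero]
      exact hProot a v (by simpa using hv)
    have := Polynomial.card_le_degree_of_subset_roots this
    rwa [(hPmonic a).2] at this
  have hfibcard : ∀ a : F, (univ.filter fun v : G => Algebra.trace F G v = a).card = m := by
    have hsum : ∑ a : F, (univ.filter fun v : G => Algebra.trace F G v = a).card
        = Fintype.card G := by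
      rw [← Finset.card_univ (α := G), Finset.card_eq_sum_card_fiberwise
        (f := fun v : G => Algebra.trace F G v) (t := univ) (fun x _ => Finset.mem_univ _)]
    have hsum2 : ∑ a : F, (univ.filter fun v : G => Algebra.trace F G v = a).card
        = ∑ _a : F, m := by
      rw [hsum, Finset.sum_const, Finset.card_univ, ← hqdef, smul_eq_mul, hqm, hGcard]
    have := (Finset.sum_eq_sum_iff_of_le (fun a _ => hfiblem a)).1 hsum2
    intro a
    exact (this a (Finset.mem_univ a))
  -- sign facts
  have hsign : (∀ x : G, (-1 : G) ^ m * (-x) = x) ∧ ((-1 : G) ^ (m - 1) = 1) := by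
    by_cases h2 : (-1 : G) = 1
    · constructor
      · intro x
        rw [h2, one_pow, one_mul, ← neg_one_mul, h2, one_mul]
      · rw [h2, one_pow]
    · obtain ⟨p, hp⟩ := CharP.exists F
      haveI : CharP F p := hp
      haveI hpG : CharP G p := charP_of_injective_algebraMap' F p
      obtain ⟨f, hpprime, hcard⟩ := FiniteField.card F p
      have hp2 : p ≠ 2 := by
        intro h
        subst h
        haveI : CharP G 2 := hpG
        exact h2 (CharTwo.neg_eq 1)
      have hqodd : Odd q := by
        rw [hqdef, hcard]
        exact (hpprime.odd_of_ne_two hp2).pow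
      have hmodd : Odd m := hqodd.pow
      constructor
      · intro x
        rw [hmodd.neg_one_pow]
        ring
      · have : Even (m - 1) := by
          rcases hmodd with ⟨t, ht⟩
          exact ⟨t, by omega⟩
        exact this.neg_one_pow
  -- product over a fiber of a (possibly zero) trace value
  have hprod : ∀ a : F, ∏ v ∈ univ.filter (fun v : G => Algebra.trace F G v = a), v
      = algebraMap F G a := by
    intro a
    have hkey := key_eval (univ.filter fun v : G => Algebra.trace F G v = a) (P a)
      (hPmonic a).1 (by rw [(hPmonic a).2, hfibcard a])
      (fun v hv => hProot a v (by simpa using (Finset.mem_filter.1 hv).2))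
    rw [hfibcard a] at hkey
    have heval : (P a).eval 0 = -(algebraMap F G a) := by
      rw [hPeq, Polynomial.eval_sub, Polynomial.eval_C, Polynomial.eval_finset_sum]
      simp only [Polynomial.eval_pow, Polynomial.eval_X]
      rw [Finset.sum_eq_zero, zero_sub]
      intro i _
      exact zero_pow (by have := hqi1 i; omega)
    have hsq : ((-1 : G)) ^ m * ((-1 : G)) ^ m = 1 := by
      rw [← mul_pow]; simp
    calc ∏ v ∈ univ.filter (fun v : G => Algebra.trace F G v = a), v
        = ((-1 : G) ^ m * (-1 : G) ^ m) * ∏ v ∈ univ.filter (fun v : G => Algebra.trace F G v = a), v := by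
          rw [hsq, one_mul]
      _ = (-1 : G) ^ m * ((P a).eval 0) := by rw [hkey]; ring
      _ = (-1 : G) ^ m * (-(algebraMap F G a)) := by rw [heval]
      _ = algebraMap F G a := hsign.1 _
  -- product over the punctured zero fiber
  have hprod0 : ∏ v ∈ univ.filter (fun v : G => Algebra.trace F G v = 0 ∧ v ≠ 0), v = 1 := by
    set P0 : Polynomial G := X ^ (m - 1) + ∑ i ∈ range k, (X : Polynomial G) ^ (q ^ i - 1)
      with hP0def
    have hP0eq : P0 = ∑ i ∈ range n, (X : Polynomial G) ^ (q ^ i - 1) := by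
      rw [hP0def, hk, Finset.sum_range_succ, hmdef, add_comm]
    have hP0monic : P0.Monic ∧ P0.natDegree = m - 1 := by
      refine aux_monic _ (m - 1) ?_
      rcases Nat.eq_zero_or_pos k with rfl | hkpos
      · left; simp
      · right
        apply lt_of_le_of_lt (Polynomial.natDegree_sum_le_of_forall_le _ _ ?_)
          (show m - 1 - 1 < m - 1 by
            have : q ^ 1 ≤ q ^ k := Nat.pow_le_pow_right (by omega) (by omega)
            rw [pow_one] at this
            omega)
        intro i hi
        rw [Polynomial.natDegree_X_pow]
        have h1 : q ^ i < q ^ k := Nat.pow_lt_pow_right hq1 (Finset.mem_range.1 hi)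
        have h2 : q ^ i * q ≤ q ^ k := by
          rw [← pow_succ]
          exact Nat.pow_le_pow_right (by omega) (Finset.mem_range.1 hi)
        have := hqi1 i
        omega
    have hS0 : univ.filter (fun v : G => Algebra.trace F G v = 0 ∧ v ≠ 0)
        = (univ.filter fun v : G => Algebra.trace F G v = 0).erase 0 := by
      ext v
      simp only [Finset.mem_filter, Finset.mem_erase, Finset.mem_univ, true_and]
      tauto
    have hS0card : (univ.filter (fun v : G => Algebra.trace F G v = 0 ∧ v ≠ 0)).card = m - 1 := by
      rw [hS0, Finset.card_erase_of_mem (by simp), hfibcard 0]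
    have hroot0 : ∀ v ∈ univ.filter (fun v : G => Algebra.trace F G v = 0 ∧ v ≠ 0),
        P0.eval v = 0 := by
      intro v hv
      have hv' := Finset.mem_filter.1 hv
      have htr : Algebra.trace F G v = 0 := hv'.2.1
      have hne : v ≠ 0 := hv'.2.2
      have hmul : v * P0.eval v = 0 := by
        rw [hP0eq, Polynomial.eval_finset_sum, Finset.mul_sum]
        have hterm : ∀ i ∈ range n, v * (Polynomial.eval v ((X : Polynomial G) ^ (q ^ i - 1)))
            = v ^ q ^ i := by
          intro i _
          rw [Polynomial.eval_pow, Polynomial.eval_X, ← pow_succ']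
          congr 1
          have := hqi1 i
          omega
        rw [Finset.sum_congr rfl hterm, ← htf, htr, map_zero]
      exact (mul_eq_zero.1 hmul).resolve_left hne
    have hkey := key_eval _ P0 hP0monic.1 (by rw [hP0monic.2, hS0card]) hroot0
    have heval0 : P0.eval 0 = 1 := by
      rw [hP0eq, Polynomial.eval_finset_sum]
      rw [Finset.sum_eq_single_of_mem 0 (Finset.mem_range.2 hn0)]
      · simp
      · intro i _ hi
        rw [Polynomial.eval_pow, Polynomial.eval_X]
        refine zero_pow ?_
        have h1 : q ^ 1 ≤ q ^ i := Nat.pow_le_pow_right (by omega) (by omega)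
        rw [pow_one] at h1
        omega
    rw [hS0card, hsign.2, one_mul] at hkey
    rw [← hkey, heval0]
  refine ⟨?_, ?_, hprod0.symm⟩
  · rw [hprod c, hprod 1, map_one, inv_mul_cancel₀]
    exact fun h => hc ((algebraMap F G).injective (by rw [h, map_zero]))
  · rw [hprod 1, map_one]
end

section
/- Let $k$ be a field containing the finite field $\mathbb{F}_q$ with $q$ elements, and let $x_1, \dots, x_n \in k$ be $\mathbb{F}_q$-linearly independent. Define the Moore determinant $\mathrm{Moore}(x_1,\dots,x_n) = \det_{i,j=1}^n x_i^{q^{n-j}}$. Then $\mathrm{Moore}(x_1,\dots,x_n) = \prod_{i=1}^n \prod_{v \in V_i} (x_i + v)$, where $V_i$ is the $\mathbb{F}_q$-span of $x_{i+1}, \dots, x_n$. -/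
open scoped BigOperators

open Polynomial in
private lemma moore_sum_pow_cardF {k : Type*} (F : Type*) [Field F] [Fintype F] [Field k]
    [Algebra F k] {ι : Type*} (s : Finset ι) (g : ι → k) (e : ℕ) :
    (∑ i ∈ s, g i) ^ (Fintype.card F) ^ e = ∑ i ∈ s, g i ^ (Fintype.card F) ^ e := by
  obtain ⟨f, hp, hcard⟩ := FiniteField.card F (ringChar F)
  haveI : CharP k (ringChar F) :=
    charP_of_injective_algebraMap (algebraMap F k).injective (ringChar F)
  haveI : ExpChar k (ringChar F) := ExpChar.prime hp
  rw [hcard, ← pow_mul]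
  exact sum_pow_char_pow (ringChar F) (↑f * e) s g

private lemma moore_smul_pow_cardF {F k : Type*} [Field F] [Fintype F] [Field k] [Algebra F k]
    (c : F) (t : k) (e : ℕ) :
    (c • t) ^ (Fintype.card F) ^ e = c • t ^ (Fintype.card F) ^ e := by
  rw [Algebra.smul_def, Algebra.smul_def, mul_pow, ← map_pow, FiniteField.pow_card_pow]

private lemma moore_row_zero {F k : Type*} [Field F] [Fintype F] [Field k] [Algebra F k]
    (m : ℕ) (y : Fin m → k) (v : k)
    (hv : v ∈ Submodule.span F (Set.range y)) :
    Matrix.det (Matrix.of fun i j : Fin (m+1) =>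
      ((Fin.cons v y : Fin (m+1) → k) i) ^ (Fintype.card F) ^ (m - (j : ℕ))) = 0 := by
  obtain ⟨c, hc⟩ := (Submodule.mem_span_range_iff_exists_fun F).1 hv
  set A : Matrix (Fin (m+1)) (Fin (m+1)) k := Matrix.of fun i j =>
      ((Fin.cons v y : Fin (m+1) → k) i) ^ (Fintype.card F) ^ (m - (j : ℕ)) with hA
  set c' : Fin (m+1) → k := Fin.cons 0 (fun i => algebraMap F k (c i)) with hc'
  have hrow : A 0 = ∑ i : Fin (m+1), c' i • A i := by
    funext j
    have h1 : (∑ i : Fin (m+1), c' i • A i) j = ∑ i : Fin (m+1), c' i • A i j := by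
      simp [Finset.sum_apply]
    rw [h1, Fin.sum_univ_succ]
    simp only [hc', Fin.cons_zero, Fin.cons_succ, zero_smul, zero_add]
    have h2 : A 0 j = v ^ (Fintype.card F) ^ (m - (j : ℕ)) := by simp [hA]
    rw [h2, ← hc, moore_sum_pow_cardF F]
    refine Finset.sum_congr rfl fun i _ => ?_
    rw [moore_smul_pow_cardF]
    simp [hA, Algebra.smul_def]
  calc A.det = (A.updateRow 0 (A 0)).det := by rw [Matrix.updateRow_eq_self]
    _ = (A.updateRow 0 (∑ i : Fin (m+1), c' i • A i)).det := by rw [← hrow]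
    _ = c' 0 • A.det := Matrix.det_updateRow_sum A 0 c'
    _ = 0 := by simp [hc']

private lemma moore_span_finite (F k : Type*) [Field F] [Fintype F] [Field k] [Algebra F k]
    (S : Set k) (hS : S.Finite) :
    ((Submodule.span F S : Submodule F k) : Set k).Finite := by
  classical
  haveI := hS.fintype
  have h1 : Submodule.span F S = Submodule.span F (Set.range (fun v : S => (v : k))) := by
    rw [Subtype.range_coe]
  have h2 : ((Submodule.span F S : Submodule F k) : Set k)
      = Set.range (fun c : S → F => ∑ i, c i • (i : k)) := by
    ext v
    rw [SetLike.mem_coe, h1, Submodule.mem_span_range_iff_exists_fun]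
    exact Iff.rfl
  rw [h2]
  exact Set.finite_range _

/-- Moore identity: for `x₁, …, xₙ ∈ k` linearly independent over the finite subfield
`F = 𝔽_q` of `k`, the Moore determinant `det (xᵢ^{q^{n-j}})` equals
`∏ᵢ ∏_{v ∈ Vᵢ} (xᵢ + v)` where `Vᵢ` is the `𝔽_q`-span of `x_{i+1}, …, xₙ`. -/
theorem stmt3 (F k : Type*) [Field F] [Fintype F] [Field k] [Algebra F k]
    (q : ℕ) (hq : q = Fintype.card F)
    (n : ℕ) (x : Fin n → k) (hx : LinearIndependent F x) :
    Matrix.det (Matrix.of fun i j : Fin n => x i ^ q ^ (n - 1 - (j : ℕ))) =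
      ∏ i : Fin n,
        ∏ᶠ v ∈ (Submodule.span F (x '' {j : Fin n | i < j}) : Set k), (x i + v) := by
  subst hq
  classical
  induction n with
  | zero => simp [Matrix.det_fin_zero]
  | succ m ih =>
    set y : Fin m → k := fun i => x i.succ with hy
    have hyli : LinearIndependent F y := hx.comp Fin.succ (Fin.succ_injective m)
    have hconsx : (Fin.cons (x 0) y : Fin (m+1) → k) = x := by
      funext i
      refine Fin.cases ?_ ?_ i <;> simp [hy]
    -- the span of the tail as a finset
    have hSfin : ((Submodule.span F (Set.range y) : Submodule F k) : Set k).Finite :=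
      moore_span_finite F k _ (Set.finite_range y)
    set s : Finset k := hSfin.toFinset with hs
    have hmem_s : ∀ v : k, v ∈ s ↔ v ∈ Submodule.span F (Set.range y) := by
      intro v
      rw [hs, Set.Finite.mem_toFinset, SetLike.mem_coe]
    have hcard_s : s.card = Fintype.card F ^ m := by
      haveI : Fintype ↥(Submodule.span F (Set.range y) : Submodule F k) := hSfin.fintype
      have h1 : s.card = Fintype.card ↥(Submodule.span F (Set.range y) : Submodule F k) := by
        rw [hs, Set.Finite.card_toFinset]
        exact Fintype.card_congr (Equiv.refl _)
      rw [h1, Module.card_eq_pow_finrank (K := F), finrank_span_eq_card hyli, Fintype.card_fin]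
    -- the Moore polynomial
    set g : Fin (m+1) → Polynomial k :=
      Fin.cons Polynomial.X (fun i => Polynomial.C (y i)) with hg
    set N : Matrix (Fin (m+1)) (Fin (m+1)) (Polynomial k) :=
      Matrix.of fun i j => (g i) ^ (Fintype.card F) ^ (m - (j : ℕ)) with hN
    set P : Polynomial k := N.det with hP
    have hevalP : ∀ t : k, P.eval t =
        (Matrix.of fun i j : Fin (m+1) =>
          ((Fin.cons t y : Fin (m+1) → k) i) ^ (Fintype.card F) ^ (m - (j : ℕ))).det := by
      intro t
      have hmap : (N.map (Polynomial.eval t)) = Matrix.of fun i j : Fin (m+1) =>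
          ((Fin.cons t y : Fin (m+1) → k) i) ^ (Fintype.card F) ^ (m - (j : ℕ)) := by
        ext i j
        simp only [Matrix.map_apply, hN, Matrix.of_apply, Polynomial.eval_pow]
        congr 1
        refine Fin.cases ?_ ?_ i <;> simp [hg]
      rw [hP, ← hmap, ← Polynomial.coe_evalRingHom, RingHom.map_det]
      rfl
    have hroots : ∀ v ∈ s, P.eval v = 0 := by
      intro v hv
      rw [hevalP v]
      exact moore_row_zero m y v ((hmem_s v).1 hv)
    -- cofactor expansion along the first row
    set d : Fin (m+1) → k := fun j =>
      (Matrix.of fun i j' : Fin m =>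
        y i ^ (Fintype.card F) ^ (m - ((j.succAbove j' : Fin (m+1)) : ℕ))).det with hd
    have hPsum : P = ∑ j : Fin (m+1),
        Polynomial.C ((-1) ^ (j : ℕ) * d j) *
          Polynomial.X ^ (Fintype.card F) ^ (m - (j : ℕ)) := by
      rw [hP, Matrix.det_succ_row_zero]
      refine Finset.sum_congr rfl fun j _ => ?_
      have h1 : N 0 j = Polynomial.X ^ (Fintype.card F) ^ (m - (j : ℕ)) := by
        simp [hN, hg]
      have h2 : (N.submatrix Fin.succ j.succAbove) =
          (Matrix.of fun i j' : Fin m =>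
            y i ^ (Fintype.card F) ^ (m - ((j.succAbove j' : Fin (m+1)) : ℕ))).map
            (Polynomial.C : k →+* Polynomial k) := by
        ext i j'
        simp [hN, hg, Matrix.submatrix_apply, map_pow]
      have h3 : ((Matrix.of fun i j' : Fin m =>
            y i ^ (Fintype.card F) ^ (m - ((j.succAbove j' : Fin (m+1)) : ℕ))).map
            (Polynomial.C : k →+* Polynomial k)).det = Polynomial.C (d j) := by
        rw [hd]
        exact (RingHom.map_det (Polynomial.C : k →+* Polynomial k) _).symm
      rw [h1, h2, h3]
      rw [map_mul, map_pow, map_neg, map_one]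
      ring
    -- the top cofactor
    have hd0 : d 0 = ∏ i : Fin m,
        ∏ᶠ v ∈ (Submodule.span F (y '' {j : Fin m | i < j}) : Set k), (y i + v) := by
      have hmat : (Matrix.of fun i j' : Fin m =>
            y i ^ (Fintype.card F) ^ (m - (((0 : Fin (m+1)).succAbove j' : Fin (m+1)) : ℕ)))
          = Matrix.of fun i j' : Fin m => y i ^ (Fintype.card F) ^ (m - 1 - (j' : ℕ)) := by
        ext i j'
        simp only [Matrix.of_apply]
        congr 2
        simp only [Fin.zero_succAbove, Fin.val_succ]
        omega
      rw [hd]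
      simp only []
      rw [hmat]
      exact ih y hyli
    -- non-vanishing of the factors
    have hne : ∀ (z : Fin m → k), LinearIndependent F z → ∀ i : Fin m,
        ∀ v ∈ Submodule.span F (z '' {j : Fin m | i < j}), z i + v ≠ 0 := by
      intro z hz i v hv h0
      have hmem : z i ∈ Submodule.span F (z '' {j : Fin m | i < j}) := by
        rw [eq_neg_of_add_eq_zero_left h0]
        exact Submodule.neg_mem _ hv
      exact hz.notMem_span_image (by simp) hmem
    have hD0 : d 0 ≠ 0 := by
      rw [hd0]
      refine Finset.prod_ne_zero_iff.2 fun i _ => ?_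
      have hTfin : ((Submodule.span F (y '' {j : Fin m | i < j}) : Submodule F k) : Set k).Finite :=
        moore_span_finite F k _ ((Set.toFinite _).image y)
      rw [← hTfin.coe_toFinset, finprod_mem_coe_finset]
      refine Finset.prod_ne_zero_iff.2 fun v hv => ?_
      exact hne y hyli i v (by simpa [Set.Finite.mem_toFinset] using hv)
    -- the comparison polynomial
    have hq1 : 1 < Fintype.card F := Fintype.one_lt_card
    set e1 : ℕ := Fintype.card F ^ m with he1
    set Q : Polynomial k :=
      Polynomial.C (d 0) * ∏ v ∈ s, (Polynomial.X - Polynomial.C v) with hQ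
    have hdegP : (P - Polynomial.C (d 0) * Polynomial.X ^ e1).degree < ((e1 : ℕ) : WithBot ℕ) := by
      have hsplit : P - Polynomial.C (d 0) * Polynomial.X ^ e1
          = ∑ j ∈ Finset.univ.erase (0 : Fin (m+1)),
              Polynomial.C ((-1) ^ (j : ℕ) * d j) *
                Polynomial.X ^ (Fintype.card F) ^ (m - (j : ℕ)) := by
        rw [hPsum, ← Finset.add_sum_erase _ _ (Finset.mem_univ (0 : Fin (m+1)))]
        simp only [Fin.val_zero, pow_zero, one_mul, Nat.sub_zero, ← he1]
        ring
      rw [hsplit]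
      refine lt_of_le_of_lt (Polynomial.degree_sum_le _ _) ?_
      rw [Finset.sup_lt_iff (by exact_mod_cast WithBot.bot_lt_coe (e1 : ℕ))]
      intro j hj
      refine lt_of_le_of_lt (Polynomial.degree_C_mul_X_pow_le _ _) ?_
      have hj0 : j ≠ 0 := Finset.ne_of_mem_erase hj
      have hjv : (j : ℕ) ≠ 0 := fun h => hj0 (Fin.ext (by simpa using h))
      have hjm : (j : ℕ) < m + 1 := j.isLt
      have : m - (j : ℕ) < m := by omega
      exact_mod_cast pow_lt_pow_right₀ hq1 this
    have hprodmonic : (∏ v ∈ s, (Polynomial.X - Polynomial.C v)).Monic :=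
      Polynomial.monic_prod_of_monic _ _ fun v _ => Polynomial.monic_X_sub_C v
    have hdegprod : (∏ v ∈ s, (Polynomial.X - Polynomial.C v)).natDegree = e1 := by
      rw [Polynomial.natDegree_prod _ _ fun v _ => Polynomial.X_sub_C_ne_zero v]
      simp [Polynomial.natDegree_X_sub_C, hcard_s]
    have hdegQ : (Q - Polynomial.C (d 0) * Polynomial.X ^ e1).degree < ((e1 : ℕ) : WithBot ℕ) := by
      rw [hQ, ← mul_sub]
      have hsub : ((∏ v ∈ s, (Polynomial.X - Polynomial.C v)) -
          Polynomial.X ^ e1).degree < ((e1 : ℕ) : WithBot ℕ) := by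
        have hdeg1 : (∏ v ∈ s, (Polynomial.X - Polynomial.C v)).degree
            = ((e1 : ℕ) : WithBot ℕ) := by
          rw [Polynomial.degree_eq_natDegree hprodmonic.ne_zero, hdegprod]
        have := Polynomial.degree_sub_lt
          (p := ∏ v ∈ s, (Polynomial.X - Polynomial.C v)) (q := Polynomial.X ^ e1)
          (by rw [hdeg1, Polynomial.degree_X_pow]) hprodmonic.ne_zero
          (by rw [hprodmonic.leadingCoeff, Polynomial.leadingCoeff_X_pow])
        rwa [hdeg1] at this
      calc (Polynomial.C (d 0) * ((∏ v ∈ s, (Polynomial.X - Polynomial.C v)) -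
              Polynomial.X ^ e1)).degree
          ≤ (Polynomial.C (d 0)).degree +
            ((∏ v ∈ s, (Polynomial.X - Polynomial.C v)) - Polynomial.X ^ e1).degree :=
            Polynomial.degree_mul_le _ _
        _ ≤ 0 + ((∏ v ∈ s, (Polynomial.X - Polynomial.C v)) - Polynomial.X ^ e1).degree :=
            add_le_add Polynomial.degree_C_le le_rfl
        _ = ((∏ v ∈ s, (Polynomial.X - Polynomial.C v)) - Polynomial.X ^ e1).degree :=
            zero_add _
        _ < ((e1 : ℕ) : WithBot ℕ) := hsub
    have hPQ : P = Q := by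
      rw [← sub_eq_zero]
      by_cases h0 : P - Q = 0
      · exact h0
      have hdeg : (P - Q).degree < ((e1 : ℕ) : WithBot ℕ) := by
        have hsplit : P - Q = (P - Polynomial.C (d 0) * Polynomial.X ^ e1) -
            (Q - Polynomial.C (d 0) * Polynomial.X ^ e1) := by ring
        rw [hsplit]
        exact lt_of_le_of_lt (Polynomial.degree_sub_le _ _) (max_lt hdegP hdegQ)
      refine Polynomial.eq_zero_of_natDegree_lt_card_of_eval_eq_zero' _ s
        (fun v hv => ?_) ?_
      · rw [Polynomial.eval_sub, hroots v hv, hQ, Polynomial.eval_mul,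
          Polynomial.eval_prod]
        rw [Finset.prod_eq_zero hv (by simp)]
        ring
      · rw [hcard_s]
        exact (Polynomial.natDegree_lt_iff_degree_lt h0).2 hdeg
    -- set identities relating the head and tail
    have hset0 : x '' {j : Fin (m+1) | 0 < j} = Set.range y := by
      ext t
      constructor
      · rintro ⟨j, hj, rfl⟩
        have hj' : (0 : Fin (m+1)) < j := hj
        have hj0 : j ≠ 0 := by
          intro h
          rw [h] at hj'
          exact lt_irrefl _ hj'
        exact ⟨j.pred hj0, by rw [hy]; simp [Fin.succ_pred]⟩
      · rintro ⟨i, rfl⟩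
        exact ⟨i.succ, i.succ_pos, by rw [hy]⟩
    have hsetS : ∀ i : Fin m,
        x '' {j : Fin (m+1) | i.succ < j} = y '' {j : Fin m | i < j} := by
      intro i
      ext t
      constructor
      · rintro ⟨j, hj, rfl⟩
        have hj' : i.succ < j := hj
        have hj0 : j ≠ 0 := by
          intro h
          rw [h] at hj'
          exact (Fin.not_lt_zero _) hj'
        refine ⟨j.pred hj0, ?_, by rw [hy]; simp [Fin.succ_pred]⟩
        show i < j.pred hj0
        rw [← Fin.succ_lt_succ_iff, Fin.succ_pred]
        exact hj'
      · rintro ⟨j', hj', rfl⟩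
        exact ⟨j'.succ, Fin.succ_lt_succ_iff.2 hj', by rw [hy]⟩
    -- the product over the span, with signs flipped
    have hprodneg : ∏ v ∈ s, (x 0 - v) = ∏ v ∈ s, (x 0 + v) := by
      refine Finset.prod_nbij' (fun v => -v) (fun v => -v) ?_ ?_ ?_ ?_ ?_
      · intro v hv
        exact (hmem_s _).2 (Submodule.neg_mem _ ((hmem_s v).1 hv))
      · intro v hv
        exact (hmem_s _).2 (Submodule.neg_mem _ ((hmem_s v).1 hv))
      · intro v _; simp
      · intro v _; simp
      · intro v _; ring
    -- final assembly
    calc (Matrix.of fun i j : Fin (m+1) => x i ^ Fintype.card F ^ (m + 1 - 1 - (j : ℕ))).det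
        = (Matrix.of fun i j : Fin (m+1) =>
            ((Fin.cons (x 0) y : Fin (m+1) → k) i) ^ Fintype.card F ^ (m - (j : ℕ))).det := by
          congr 1
          ext i j
          rw [hconsx]
          simp only [Matrix.of_apply]
          congr 2
      _ = P.eval (x 0) := (hevalP (x 0)).symm
      _ = Q.eval (x 0) := by rw [hPQ]
      _ = d 0 * ∏ v ∈ s, (x 0 - v) := by
          rw [hQ]
          simp [Polynomial.eval_prod]
      _ = d 0 * ∏ v ∈ s, (x 0 + v) := by rw [hprodneg]
      _ = (∏ v ∈ s, (x 0 + v)) * d 0 := mul_comm _ _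
      _ = ∏ i : Fin (m+1),
            ∏ᶠ v ∈ (Submodule.span F (x '' {j : Fin (m+1) | i < j}) : Set k), (x i + v) := by
          rw [Fin.prod_univ_succ]
          congr 1
          · rw [hset0, ← hSfin.coe_toFinset, finprod_mem_coe_finset]
          · rw [hd0]
            refine Finset.prod_congr rfl fun i _ => ?_
            rw [hsetS i]
end

section
/- Let $k$ be a field containing $\mathbb{F}_q$, let $\phi : k \to \mathbb{F}_q$ be an $\mathbb{F}_q$-linear map, and let $x_1,\dots,x_n \in k$ be $\mathbb{F}_q$-linearly independent with $\phi(x_i) \neq 0$ for some $i$. Define the Ore determinant $\mathrm{Ore}(\phi; x_1,\dots,x_n)$ as the determinant of the $n \times n$ matrix whose first column is $(\phi(x_1),\dots,\phi(x_n))^T$ and whose $(i,j)$ entry for $j \geq 2$ is $x_i^{q^{n-j}}$. Let $V$ be the $\mathbb{F}_q$-span of $x_1,\dots,x_n$. Then $\mathrm{Ore}(\phi; x_1,\dots,x_n) / \mathrm{Moore}(x_1,\dots,x_n) = \prod_{v \in V,\, \phi(v)=1} v^{-1}$. -/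
open scoped BigOperators

open Polynomial

set_option linter.unusedSectionVars false
set_option maxHeartbeats 1000000

section OreAux

variable {F k : Type*} [Field F] [Fintype F] [Field k] [Algebra F k]

private lemma frob_add (a b : k) (e : ℕ) :
    (a + b) ^ (Fintype.card F) ^ e = a ^ (Fintype.card F) ^ e + b ^ (Fintype.card F) ^ e := by
  obtain ⟨p, hchar⟩ := CharP.exists F
  obtain ⟨s, hp, hcard⟩ := FiniteField.card F p
  haveI : Fact p.Prime := ⟨hp⟩
  haveI : CharP k p := charP_of_injective_algebraMap (algebraMap F k).injective p
  rw [hcard, ← pow_mul, add_pow_char_pow, pow_mul]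

private noncomputable def powLM (F : Type*) {k : Type*} [Field F] [Fintype F] [Field k]
    [Algebra F k] (e : ℕ) : k →ₗ[F] k where
  toFun t := t ^ (Fintype.card F) ^ e
  map_add' a b := frob_add a b e
  map_smul' c t := by
    simp only [RingHom.id_apply]
    rw [_root_.smul_pow, FiniteField.pow_card_pow]

@[simp] private lemma powLM_apply (e : ℕ) (t : k) :
    powLM F e t = t ^ (Fintype.card F) ^ e := rfl

private lemma det_baseChange {n : ℕ} (f : Fin n → (k →ₗ[F] k)) (g : Matrix (Fin n) (Fin n) F)
    (x : Fin n → k) :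
    (Matrix.of fun i j => f j (∑ l, g i l • x l)).det
      = algebraMap F k g.det * (Matrix.of fun i j => f j (x i)).det := by
  have h : (Matrix.of fun i j => f j (∑ l, g i l • x l))
      = (g.map (algebraMap F k)) * (Matrix.of fun i j => f j (x i)) := by
    ext i j
    simp only [Matrix.of_apply, Matrix.mul_apply, Matrix.map_apply, map_sum]
    exact Finset.sum_congr rfl fun l _ => by rw [LinearMap.map_smul, Algebra.smul_def]
  rw [h, Matrix.det_mul, ← RingHom.mapMatrix_apply, ← RingHom.map_det]

private lemma span_card {m : ℕ} (z : Fin m → k) (hz : LinearIndependent F z)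
    (Wfin : Finset k) (hW : (Wfin : Set k) = (Submodule.span F (Set.range z) : Set k)) :
    Wfin.card = (Fintype.card F) ^ m := by
  classical
  haveI := FiniteDimensional.span_of_finite F (Set.finite_range z)
  haveI : Finite (Submodule.span F (Set.range z)) := Module.finite_of_finite F
  haveI : Fintype (Submodule.span F (Set.range z)) := Fintype.ofFinite _
  have h1 : Wfin.card = Nat.card (Submodule.span F (Set.range z)) := by
    rw [← Set.ncard_coe_finset, hW, ← Nat.card_coe_set_eq]
    simp
  rw [h1, Nat.card_eq_fintype_card, Module.card_eq_pow_finrank (K := F), finrank_span_eq_card hz,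
    Fintype.card_fin]

private lemma moore_factor {m : ℕ} (z : Fin (m + 1) → k)
    (hz : LinearIndependent F (Fin.tail z))
    (Wfin : Finset k)
    (hW : (Wfin : Set k) = (Submodule.span F (Set.range (Fin.tail z)) : Set k)) :
    (Matrix.of fun i j : Fin (m + 1) => z i ^ Fintype.card F ^ (m - (j : ℕ))).det
      = (Matrix.of fun i j : Fin m => Fin.tail z i ^ Fintype.card F ^ (m - 1 - (j : ℕ))).det
        * ∏ w ∈ Wfin, (z 0 - w) := by
  classical
  set q := Fintype.card F with hqdef
  have hq1 : 1 < q := Fintype.one_lt_card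
  set Mp : Matrix (Fin (m + 1)) (Fin (m + 1)) k[X] :=
    Matrix.of (fun i j : Fin (m + 1) =>
      if i = 0 then (X : k[X]) ^ q ^ (m - (j : ℕ)) else C (z i ^ q ^ (m - (j : ℕ)))) with hMp
  set P : k[X] := Mp.det with hP
  have heval : ∀ t : k, P.eval t =
      (Matrix.of fun i j : Fin (m + 1) =>
        (if i = 0 then t else z i) ^ q ^ (m - (j : ℕ))).det := by
    intro t
    have h0 : P.eval t = (Polynomial.evalRingHom t) Mp.det := rfl
    rw [h0, RingHom.map_det]
    congr 1
    ext i j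
    rcases eq_or_ne i 0 with rfl | hi
    · simp [hMp]
    · simp [hMp, hi]
  have hroot : ∀ w : k, w ∈ Submodule.span F (Set.range (Fin.tail z)) → P.eval w = 0 := by
    intro w hw
    rw [heval]
    set M : Matrix (Fin (m + 1)) (Fin (m + 1)) k :=
      Matrix.of (fun i j : Fin (m + 1) => (if i = 0 then w else z i) ^ q ^ (m - (j : ℕ))) with hM
    obtain ⟨c, hc⟩ := (Submodule.mem_span_range_iff_exists_fun F).mp hw
    set d : Fin (m + 1) → k := Fin.cons 0 (fun i => algebraMap F k (c i)) with hd
    have hM0 : M 0 = ∑ l, d l • M l := by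
      funext j
      rw [Finset.sum_apply]
      simp only [Pi.smul_apply, smul_eq_mul]
      rw [Fin.sum_univ_succ]
      simp only [hd, Fin.cons_zero, Fin.cons_succ, zero_mul, zero_add]
      have hMij : ∀ i : Fin m, M i.succ j = (Fin.tail z i) ^ q ^ (m - (j : ℕ)) := by
        intro i
        simp [hM, Fin.succ_ne_zero, Fin.tail]
      have hM0j : M 0 j = w ^ q ^ (m - (j : ℕ)) := by simp [hM]
      rw [hM0j, ← hc,
        show (∑ i, c i • Fin.tail z i) ^ q ^ (m - (j : ℕ))
          = powLM F (m - (j : ℕ)) (∑ i, c i • Fin.tail z i) from rfl,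
        map_sum]
      refine Finset.sum_congr rfl fun i _ => ?_
      rw [LinearMap.map_smul, powLM_apply, ← hMij i, Algebra.smul_def]
    calc M.det = (M.updateRow 0 (∑ l, d l • M l)).det := by rw [← hM0, Matrix.updateRow_eq_self]
      _ = d 0 • M.det := Matrix.det_updateRow_sum M 0 d
      _ = 0 := by simp [hd]
  -- cofactor expansion
  set e : Fin (m + 1) → k := fun j => (Matrix.of fun i l : Fin m =>
      z i.succ ^ q ^ (m - (j.succAbove l : ℕ))).det with he
  have hPsum : P = ∑ j : Fin (m + 1), C ((-1) ^ (j : ℕ) * e j) * X ^ q ^ (m - (j : ℕ)) := by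
    rw [hP, Matrix.det_succ_row_zero]
    refine Finset.sum_congr rfl fun j _ => ?_
    have hminor : Mp.submatrix Fin.succ j.succAbove
        = (Matrix.of fun i l : Fin m => z i.succ ^ q ^ (m - (j.succAbove l : ℕ))).map C := by
      ext i l
      simp [hMp, Fin.succ_ne_zero]
    rw [hminor, ← RingHom.mapMatrix_apply, ← RingHom.map_det]
    have hMp0j : Mp 0 j = X ^ q ^ (m - (j : ℕ)) := by simp [hMp]
    have hej : (Matrix.of fun i l : Fin m => z i.succ ^ q ^ (m - (j.succAbove l : ℕ))).det
        = e j := rfl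
    rw [hMp0j, hej, map_mul, map_pow, map_neg, map_one]
    ring
  have hd0 : e 0 = (Matrix.of fun i j : Fin m => Fin.tail z i ^ q ^ (m - 1 - (j : ℕ))).det := by
    show (Matrix.of fun i l : Fin m =>
        z i.succ ^ q ^ (m - (((0 : Fin (m + 1)).succAbove l : Fin (m+1)) : ℕ))).det = _
    congr 1
    ext i l
    have h1 : (((0 : Fin (m + 1)).succAbove l : Fin (m+1)) : ℕ) = (l : ℕ) + 1 := by
      simp [Fin.succAbove_zero]
    rw [Matrix.of_apply, Matrix.of_apply, h1]
    have h2 : m - ((l : ℕ) + 1) = m - 1 - (l : ℕ) := by omega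
    rw [h2]
    rfl
  set L : k := (Matrix.of fun i j : Fin m => Fin.tail z i ^ q ^ (m - 1 - (j : ℕ))).det with hL
  set R : k[X] := ∏ w ∈ Wfin, (X - C w) with hR
  have hcard : Wfin.card = q ^ m := span_card (Fin.tail z) hz Wfin hW
  have hRmonic : R.Monic := monic_prod_of_monic _ _ fun w _ => monic_X_sub_C w
  have hRdeg : R.natDegree = q ^ m := by
    rw [hR, natDegree_prod _ _ fun w _ => X_sub_C_ne_zero w]
    simp [natDegree_X_sub_C, hcard]
  have hPcoeff : P.coeff (q ^ m) = L := by
    rw [hPsum, finset_sum_coeff]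
    rw [Finset.sum_eq_single (0 : Fin (m + 1))]
    · simp [coeff_C_mul, coeff_X_pow, hd0]
    · intro j _ hj
      have hj0 : (j : ℕ) ≠ 0 := fun h => hj (Fin.ext h)
      have hjlt : q ^ (m - (j : ℕ)) < q ^ m := by
        apply Nat.pow_lt_pow_right hq1
        have := j.is_le
        omega
      rw [coeff_C_mul, coeff_X_pow, if_neg (Nat.ne_of_gt hjlt), mul_zero]
    · simp
  have hPdeg : P.natDegree ≤ q ^ m := by
    rw [hPsum]
    refine Polynomial.natDegree_sum_le_of_forall_le _ _ fun j _ => ?_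
    refine (natDegree_C_mul_le _ _).trans ?_
    rw [natDegree_X_pow]
    exact Nat.pow_le_pow_right (Nat.le_of_lt hq1) (Nat.sub_le m _)
  have hQ : P - C L * R = 0 := by
    by_cases hne : P - C L * R = 0
    · exact hne
    exfalso
    have hdeg2 : (C L * R).natDegree ≤ q ^ m := (natDegree_C_mul_le _ _).trans hRdeg.le
    have hcoeff2 : (C L * R).coeff (q ^ m) = L := by
      rw [coeff_C_mul, ← hRdeg, hRmonic.coeff_natDegree, mul_one]
    have hQdeg : (P - C L * R).natDegree < q ^ m := by
      rcases lt_or_eq_of_le ((natDegree_sub_le _ _).trans (max_le hPdeg hdeg2)) with h | h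
      · exact h
      · exfalso
        have hz0 : (P - C L * R).coeff (q ^ m) = 0 := by
          rw [coeff_sub, hPcoeff, hcoeff2, sub_self]
        rw [← h] at hz0
        exact (Polynomial.leadingCoeff_ne_zero.mpr hne) hz0
    have := Polynomial.eq_zero_of_natDegree_lt_card_of_eval_eq_zero' (P - C L * R) Wfin
      (fun w hw => ?_) (by rw [hcard]; exact hQdeg)
    · exact hne this
    · have hwmem : w ∈ Submodule.span F (Set.range (Fin.tail z)) := by
        have : w ∈ (Wfin : Set k) := hw
        rw [hW] at this
        exact this
      have h1 : P.eval w = 0 := hroot w hwmem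
      have h2 : (C L * R).eval w = 0 := by
        rw [eval_mul, hR, eval_prod, Finset.prod_eq_zero hw (by simp)]
        ring
      rw [eval_sub, h1, h2, sub_zero]
  have hPfact : P = C L * R := by
    have := sub_eq_zero.mp hQ
    exact this
  have hfin : (Matrix.of fun i j : Fin (m + 1) => z i ^ q ^ (m - (j : ℕ))).det = P.eval (z 0) := by
    rw [heval]
    congr 1
    ext i j
    rcases eq_or_ne i 0 with rfl | hi
    · simp
    · simp [hi]
  rw [hfin, hPfact, eval_mul, eval_C, hR, eval_prod]
  simp [hL]

private lemma span_finite (s : Set k) (hs : s.Finite) :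
    ((Submodule.span F s : Submodule F k) : Set k).Finite := by
  haveI := FiniteDimensional.span_of_finite F hs
  haveI : Finite (Submodule.span F s) := Module.finite_of_finite F
  exact Set.toFinite _

private lemma moore_ne_zero : ∀ (s : ℕ) (z : Fin s → k), LinearIndependent F z →
    (Matrix.of fun i j : Fin s => z i ^ Fintype.card F ^ (s - 1 - (j : ℕ))).det ≠ 0 := by
  intro s
  induction s with
  | zero =>
    intro z _
    rw [Matrix.det_fin_zero]
    exact one_ne_zero
  | succ m ih =>
    intro z hz
    have htail : LinearIndependent F (Fin.tail z) := hz.comp Fin.succ (Fin.succ_injective m)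
    have hfin : ((Submodule.span F (Set.range (Fin.tail z)) : Submodule F k) : Set k).Finite :=
      span_finite _ (Set.finite_range _)
    have hfac := moore_factor z htail hfin.toFinset (by simp)
    have hz0 : z 0 ∉ Submodule.span F (Set.range (Fin.tail z)) := by
      have h := hz
      rw [← Fin.cons_self_tail z] at h
      exact (linearIndependent_fin_cons.mp h).2
    have h1 : (Matrix.of fun i j : Fin m =>
        Fin.tail z i ^ Fintype.card F ^ (m - 1 - (j : ℕ))).det ≠ 0 := ih _ htail
    have h2 : (∏ w ∈ hfin.toFinset, (z 0 - w)) ≠ 0 := by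
      refine Finset.prod_ne_zero_iff.mpr fun w hw => ?_
      rw [Set.Finite.mem_toFinset] at hw
      exact sub_ne_zero.mpr fun h => hz0 (h ▸ hw)
    have hexp : ∀ j : Fin (m + 1), m + 1 - 1 - (j : ℕ) = m - (j : ℕ) := fun j => by omega
    have hgoal : (Matrix.of fun i j : Fin (m + 1) =>
          z i ^ Fintype.card F ^ (m + 1 - 1 - (j : ℕ))).det
        = (Matrix.of fun i j : Fin (m + 1) => z i ^ Fintype.card F ^ (m - (j : ℕ))).det := rfl
    rw [hgoal, hfac]
    exact mul_ne_zero h1 h2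

private lemma x_from_y {n : ℕ} (g : Matrix (Fin n) (Fin n) F) (hg : IsUnit g.det)
    (x y : Fin n → k) (hy : ∀ i, y i = ∑ l, g i l • x l) (i : Fin n) :
    x i = ∑ j, g⁻¹ i j • y j := by
  have h1 : g⁻¹ * g = 1 := Matrix.nonsing_inv_mul g hg
  have h2 : ∑ j, g⁻¹ i j • y j = ∑ l, (∑ j, g⁻¹ i j * g j l) • x l := by
    simp only [hy, Finset.smul_sum, smul_smul, Finset.sum_smul]
    rw [Finset.sum_comm]
  rw [h2]
  have h3 : ∀ l, ∑ j, g⁻¹ i j * g j l = (1 : Matrix (Fin n) (Fin n) F) i l := by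
    intro l
    rw [← h1, Matrix.mul_apply]
  simp only [h3, Matrix.one_apply, ite_smul, one_smul, zero_smul]
  rw [Finset.sum_ite_eq]
  simp

private lemma li_comb {n : ℕ} (g : Matrix (Fin n) (Fin n) F) (hg : IsUnit g.det)
    (x y : Fin n → k) (hy : ∀ i, y i = ∑ l, g i l • x l) (hx : LinearIndependent F x) :
    LinearIndependent F y := by
  have h2 : g * g⁻¹ = 1 := Matrix.mul_nonsing_inv g hg
  rw [Fintype.linearIndependent_iff] at hx ⊢
  intro c hc i
  have key : ∀ l, (∑ j, c j * g j l) = 0 := by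
    apply hx
    have h : ∑ i, c i • y i = ∑ l, (∑ j, c j * g j l) • x l := by
      simp only [hy, Finset.smul_sum, smul_smul, Finset.sum_smul]
      rw [Finset.sum_comm]
    rw [← h]
    exact hc
  have h4 : c i = ∑ l, (∑ j, c j * g j l) * g⁻¹ l i := by
    simp only [Finset.sum_mul, mul_assoc]
    rw [Finset.sum_comm]
    simp only [← Finset.mul_sum]
    have h5 : ∀ j, (∑ l, g j l * g⁻¹ l i) = (1 : Matrix (Fin n) (Fin n) F) j i := by
      intro j
      rw [← h2, Matrix.mul_apply]
    simp only [h5, Matrix.one_apply, mul_ite, mul_one, mul_zero]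
    rw [Finset.sum_ite_eq']
    simp
  rw [h4]
  simp [key]

private lemma span_le_comb {n : ℕ} (x y : Fin n → k) (g : Matrix (Fin n) (Fin n) F)
    (hy : ∀ i, y i = ∑ l, g i l • x l) :
    Submodule.span F (Set.range y) ≤ Submodule.span F (Set.range x) := by
  rw [Submodule.span_le]
  rintro _ ⟨i, rfl⟩
  rw [hy]
  exact Submodule.sum_mem _ fun l _ => Submodule.smul_mem _ _ (Submodule.subset_span ⟨l, rfl⟩)

private lemma span_comb {n : ℕ} (g : Matrix (Fin n) (Fin n) F) (hg : IsUnit g.det)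
    (x y : Fin n → k) (hy : ∀ i, y i = ∑ l, g i l • x l) :
    Submodule.span F (Set.range y) = Submodule.span F (Set.range x) :=
  le_antisymm (span_le_comb x y g hy)
    (span_le_comb y x g⁻¹ (fun i => x_from_y g hg x y hy i))

end OreAux

/-- Ore identity: for an `𝔽_q`-linear map `φ : k → 𝔽_q`, and `x₁, …, xₙ ∈ k` linearly
independent over `𝔽_q` with `φ(xᵢ) ≠ 0` for some `i`, the ratio of the Ore determinant
(first column `φ(xᵢ)`, later columns `xᵢ^{q^{n-j}}`) to the Moore determinant equals
`∏_{v ∈ V, φ(v) = 1} v⁻¹`, where `V` is the `𝔽_q`-span of `x₁, …, xₙ`. -/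
theorem stmt5 (F k : Type*) [Field F] [Fintype F] [Field k] [Algebra F k]
    (q : ℕ) (hq : q = Fintype.card F)
    (φ : k →ₗ[F] F)
    (n : ℕ) (x : Fin n → k) (hx : LinearIndependent F x)
    (hφ : ∃ i, φ (x i) ≠ 0) :
    Matrix.det (Matrix.of fun i j : Fin n =>
        if (j : ℕ) = 0 then algebraMap F k (φ (x i)) else x i ^ q ^ (n - 1 - (j : ℕ))) /
      Matrix.det (Matrix.of fun i j : Fin n => x i ^ q ^ (n - 1 - (j : ℕ))) =
      ∏ᶠ v ∈ {v : k | v ∈ Submodule.span F (Set.range x) ∧ φ v = 1}, v⁻¹ := by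
  subst hq
  obtain ⟨i₀, hi₀⟩ := hφ
  cases n with
  | zero => exact i₀.elim0
  | succ m =>
  classical
  -- column linear maps
  set f : Fin (m + 1) → (k →ₗ[F] k) := fun j =>
    if (j : ℕ) = 0 then (Algebra.linearMap F k).comp φ else powLM F (m + 1 - 1 - (j : ℕ))
    with hf
  have hOreM : ∀ t : Fin (m + 1) → k,
      (Matrix.of fun i j : Fin (m + 1) =>
        if (j : ℕ) = 0 then algebraMap F k (φ (t i))
        else t i ^ Fintype.card F ^ (m + 1 - 1 - (j : ℕ)))
      = Matrix.of fun i j => f j (t i) := by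
    intro t
    ext i j
    rw [Matrix.of_apply, Matrix.of_apply, hf]
    by_cases h : (j : ℕ) = 0
    · simp [h]
    · simp [h]
  have hMooreM : ∀ t : Fin (m + 1) → k,
      (Matrix.of fun i j : Fin (m + 1) => t i ^ Fintype.card F ^ (m + 1 - 1 - (j : ℕ)))
      = Matrix.of fun (i j : Fin (m + 1)) => powLM F (m + 1 - 1 - (j : ℕ)) (t i) := fun t => rfl
  -- step 1 : swap 0 and i₀
  set σ : Equiv.Perm (Fin (m + 1)) := Equiv.swap 0 i₀ with hσ
  set x' : Fin (m + 1) → k := x ∘ σ with hx'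
  have hx'li : LinearIndependent F x' := hx.comp σ σ.injective
  have hx'span : Submodule.span F (Set.range x') = Submodule.span F (Set.range x) := by
    rw [hx', Set.range_comp, Equiv.range_eq_univ, Set.image_univ]
  have hc : φ (x' 0) ≠ 0 := by
    rw [hx']
    simpa [hσ, Equiv.swap_apply_left] using hi₀
  set c : F := φ (x' 0) with hcdef
  -- step 2 : elimination matrix
  set g : Matrix (Fin (m + 1)) (Fin (m + 1)) F := fun i j =>
    if i = 0 then (if j = 0 then c⁻¹ else 0)
    else (if j = i then 1 else if j = 0 then -(c⁻¹ * φ (x' i)) else 0) with hg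
  set y : Fin (m + 1) → k := fun i => ∑ l, g i l • x' l with hydef
  have hy : ∀ i, y i = ∑ l, g i l • x' l := fun i => rfl
  have hy0 : y 0 = c⁻¹ • x' 0 := by
    rw [hy 0]
    have : ∀ l, g 0 l • x' l = if l = 0 then c⁻¹ • x' l else 0 := by
      intro l
      by_cases h : l = 0 <;> simp [hg, h]
    simp only [this]
    rw [Finset.sum_ite_eq' Finset.univ (0 : Fin (m + 1))]
    simp
  have hyi : ∀ i : Fin (m + 1), i ≠ 0 → y i = x' i + (-(c⁻¹ * φ (x' i))) • x' 0 := by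
    intro i hi
    rw [hy i]
    have : ∀ l, g i l • x' l =
        (if l = i then x' i else 0) + (if l = 0 then (-(c⁻¹ * φ (x' i))) • x' 0 else 0) := by
      intro l
      by_cases h1 : l = i
      · subst h1
        simp [hg, hi]
      · by_cases h2 : l = 0
        · subst h2
          simp [hg, Ne.symm hi, hi, h1]
        · simp [hg, h1, h2]
    simp only [this]
    rw [Finset.sum_add_distrib, Finset.sum_ite_eq' Finset.univ i, Finset.sum_ite_eq' Finset.univ (0 : Fin (m + 1))]
    simp
  have hgdet : g.det = c⁻¹ := by
    have htri : g.BlockTriangular OrderDual.toDual := by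
      intro i j hij
      have hij' : i < j := hij
      have hj0 : j ≠ 0 := by
        intro h
        rw [h] at hij'
        exact absurd hij' (by simp)
      have hji : j ≠ i := ne_of_gt hij'
      by_cases h : i = 0 <;> simp [hg, h, hj0, hji]
    rw [Matrix.det_of_lowerTriangular g htri]
    rw [Fin.prod_univ_succ]
    have h1 : g 0 0 = c⁻¹ := by simp [hg]
    have h2 : ∀ i : Fin m, g i.succ i.succ = 1 := by
      intro i
      simp [hg, Fin.succ_ne_zero]
    simp [h1, h2]
  have hgu : IsUnit g.det := by
    rw [hgdet]
    exact (inv_ne_zero hc).isUnit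
  have hyli : LinearIndependent F y := li_comb g hgu x' y hy hx'li
  have hyspan : Submodule.span F (Set.range y) = Submodule.span F (Set.range x) := by
    rw [span_comb g hgu x' y hy, hx'span]
  have hφy0 : φ (y 0) = 1 := by
    rw [hy0, map_smul, smul_eq_mul, ← hcdef, inv_mul_cancel₀ hc]
  have hφyi : ∀ i : Fin (m + 1), i ≠ 0 → φ (y i) = 0 := by
    intro i hi
    rw [hyi i hi, map_add, map_smul, smul_eq_mul, ← hcdef]
    field_simp
    ring
  -- tail of y and the kernel subspace
  have htaily : LinearIndependent F (Fin.tail y) := hyli.comp Fin.succ (Fin.succ_injective m)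
  set W : Submodule F k := Submodule.span F (Set.range (Fin.tail y)) with hWdef
  have hWfinite : (W : Set k).Finite := span_finite _ (Set.finite_range _)
  set Wfin : Finset k := hWfinite.toFinset with hWfin
  have hWcoe : (Wfin : Set k) = (W : Set k) := Set.Finite.coe_toFinset _
  set L : k := (Matrix.of fun i j : Fin m =>
      Fin.tail y i ^ Fintype.card F ^ (m - 1 - (j : ℕ))).det with hLdef
  set Pr : k := ∏ w ∈ Wfin, (y 0 - w) with hPrdef
  have hL0 : L ≠ 0 := moore_ne_zero m (Fin.tail y) htaily
  have hy0W : y 0 ∉ W := by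
    have h := hyli
    rw [← Fin.cons_self_tail y] at h
    exact (linearIndependent_fin_cons.mp h).2
  have hPr0 : Pr ≠ 0 := by
    rw [hPrdef]
    refine Finset.prod_ne_zero_iff.mpr fun w hw => ?_
    rw [Set.Finite.mem_toFinset] at hw
    exact sub_ne_zero.mpr fun h => hy0W (h ▸ hw)
  -- determinant computations for y
  have hMooreY : (Matrix.of fun (i j : Fin (m + 1)) =>
      powLM F (m + 1 - 1 - (j : ℕ)) (y i)).det = L * Pr := by
    have h0 : (Matrix.of fun (i j : Fin (m + 1)) => powLM F (m + 1 - 1 - (j : ℕ)) (y i))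
        = Matrix.of fun (i j : Fin (m + 1)) => y i ^ Fintype.card F ^ (m - (j : ℕ)) := rfl
    rw [h0]
    exact moore_factor y htaily Wfin hWcoe
  have hOreY : (Matrix.of fun (i j : Fin (m + 1)) => f j (y i)).det = L := by
    rw [Matrix.det_succ_column_zero]
    have hcol : ∀ i : Fin (m + 1),
        (Matrix.of fun (i j : Fin (m + 1)) => f j (y i)) i 0 = algebraMap F k (φ (y i)) := by
      intro i
      simp [hf]
    rw [Finset.sum_eq_single (0 : Fin (m + 1))]
    · have hminor : (Matrix.of fun (i j : Fin (m + 1)) => f j (y i)).submatrix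
          (Fin.succAbove 0) Fin.succ
          = Matrix.of fun (i j : Fin m) =>
              Fin.tail y i ^ Fintype.card F ^ (m - 1 - (j : ℕ)) := by
        ext i j
        rw [Matrix.submatrix_apply, Matrix.of_apply, Matrix.of_apply, Fin.succAbove_zero]
        have hjs : ((j.succ : Fin (m + 1)) : ℕ) = (j : ℕ) + 1 := rfl
        rw [hf]
        simp only [hjs]
        rw [if_neg (by omega)]
        rw [powLM_apply]
        rw [show m + 1 - 1 - ((j : ℕ) + 1) = m - 1 - (j : ℕ) from by omega]
        rfl
      rw [hminor, hcol 0, hφy0, map_one]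
      simp [hLdef]
    · intro i _ hi
      rw [hcol i, hφyi i hi, map_zero]
      ring
    · simp
  -- base change factors
  set ε : k := ((Equiv.Perm.sign σ : ℤ) : k) with hε
  have hε0 : ε ≠ 0 := by
    rcases Int.units_eq_one_or (Equiv.Perm.sign σ) with h | h <;> simp [hε, h]
  set d : k := algebraMap F k g.det * ε with hd
  have hd0 : d ≠ 0 := by
    refine mul_ne_zero ?_ hε0
    rw [hgdet]
    simpa using inv_ne_zero hc
  have hOreP : (Matrix.of fun (i j : Fin (m + 1)) => f j (x' i)).det
      = ε * (Matrix.of fun (i j : Fin (m + 1)) => f j (x i)).det := by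
    have hsub : (Matrix.of fun (i j : Fin (m + 1)) => f j (x' i))
        = (Matrix.of fun (i j : Fin (m + 1)) => f j (x i)).submatrix σ id := rfl
    rw [hsub, Matrix.det_permute]
  have hMooreP : (Matrix.of fun (i j : Fin (m + 1)) => powLM F (m + 1 - 1 - (j : ℕ)) (x' i)).det
      = ε * (Matrix.of fun (i j : Fin (m + 1)) => powLM F (m + 1 - 1 - (j : ℕ)) (x i)).det := by
    have hsub : (Matrix.of fun (i j : Fin (m + 1)) => powLM F (m + 1 - 1 - (j : ℕ)) (x' i))
        = (Matrix.of fun (i j : Fin (m + 1)) =>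
            powLM F (m + 1 - 1 - (j : ℕ)) (x i)).submatrix σ id := rfl
    rw [hsub, Matrix.det_permute]
  have hOreB : (Matrix.of fun (i j : Fin (m + 1)) => f j (y i)).det
      = d * (Matrix.of fun (i j : Fin (m + 1)) => f j (x i)).det := by
    have h0 : (Matrix.of fun (i j : Fin (m + 1)) => f j (y i))
        = Matrix.of fun (i j : Fin (m + 1)) => f j (∑ l, g i l • x' l) := rfl
    rw [h0, det_baseChange, hOreP, hd]
    ring
  have hMooreB : (Matrix.of fun (i j : Fin (m + 1)) => powLM F (m + 1 - 1 - (j : ℕ)) (y i)).det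
      = d * (Matrix.of fun (i j : Fin (m + 1)) => powLM F (m + 1 - 1 - (j : ℕ)) (x i)).det := by
    have h0 : (Matrix.of fun (i j : Fin (m + 1)) => powLM F (m + 1 - 1 - (j : ℕ)) (y i))
        = Matrix.of fun (i j : Fin (m + 1)) =>
            (fun j : Fin (m + 1) => powLM F (m + 1 - 1 - (j : ℕ))) j (∑ l, g i l • x' l) := rfl
    rw [h0, det_baseChange, hMooreP, hd]
    ring
  -- the set of solutions
  have hker : ∀ u, u ∈ Submodule.span F (Set.range y) → φ u = 0 → u ∈ W := by
    intro u hu h0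
    obtain ⟨co, hco⟩ := (Submodule.mem_span_range_iff_exists_fun F).mp hu
    have hc0 : co 0 = 0 := by
      have h1 := congrArg φ hco
      rw [map_sum] at h1
      simp only [map_smul] at h1
      rw [Fin.sum_univ_succ, hφy0] at h1
      have h2 : ∀ i : Fin m, co i.succ • φ (y i.succ) = 0 := fun i => by
        rw [hφyi _ (Fin.succ_ne_zero i), smul_zero]
      rw [Finset.sum_congr rfl fun i _ => h2 i] at h1
      simpa [h0] using h1
    rw [← hco, Fin.sum_univ_succ, hc0, zero_smul, zero_add]
    exact Submodule.sum_mem _ fun i _ =>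
      Submodule.smul_mem _ _ (Submodule.subset_span ⟨i, rfl⟩)
  have hWker : ∀ w, w ∈ W → φ w = 0 := by
    intro w hw
    have hle : W ≤ LinearMap.ker φ := by
      rw [hWdef, Submodule.span_le]
      rintro _ ⟨i, rfl⟩
      exact LinearMap.mem_ker.mpr (hφyi _ (Fin.succ_ne_zero i))
    exact LinearMap.mem_ker.mp (hle hw)
  have hWleV : W ≤ Submodule.span F (Set.range y) := by
    rw [hWdef, Submodule.span_le]
    rintro _ ⟨i, rfl⟩
    exact Submodule.subset_span ⟨i.succ, rfl⟩
  have hy0V : y 0 ∈ Submodule.span F (Set.range y) := Submodule.subset_span ⟨0, rfl⟩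
  have hSet : {v : k | v ∈ Submodule.span F (Set.range x) ∧ φ v = 1}
      = ↑(Wfin.image fun w => y 0 - w) := by
    ext v
    simp only [Set.mem_setOf_eq, Finset.coe_image, Set.mem_image, Finset.mem_coe,
      Finset.mem_image]
    constructor
    · rintro ⟨hv, hv1⟩
      rw [← hyspan] at hv
      refine ⟨y 0 - v, ?_, by ring⟩
      rw [hWfin, Set.Finite.mem_toFinset]
      refine hker _ (Submodule.sub_mem _ hy0V hv) ?_
      rw [map_sub, hφy0, hv1, sub_self]
    · rintro ⟨w, hw, rfl⟩
      rw [hWfin, Set.Finite.mem_toFinset] at hw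
      constructor
      · rw [← hyspan]
        exact Submodule.sub_mem _ hy0V (hWleV hw)
      · rw [map_sub, hφy0, hWker w hw, sub_zero]
  -- assemble
  rw [hOreM x, hMooreM x, hSet, finprod_mem_coe_finset,
    Finset.prod_image (fun a _ b _ h => by rwa [sub_right_inj] at h),
    Finset.prod_inv_distrib, ← hPrdef]
  have h1 := mul_div_mul_left ((Matrix.of fun (i j : Fin (m + 1)) => f j (x i)).det)
    ((Matrix.of fun (i j : Fin (m + 1)) => powLM F (m + 1 - 1 - (j : ℕ)) (x i)).det) hd0
  rw [← h1, ← hOreB, ← hMooreB, hOreY, hMooreY, div_mul_cancel_left₀ hL0]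
end

section
/- Let $\mathbb{F}_q$ be a finite field and let $\Lambda_0 = \bigcup_{n \geq 1} \mathbb{F}_{q^n}[[X,Y]]$ (the union of two-variable power series rings over all finite extensions of $\mathbb{F}_q$ inside a fixed algebraic closure), and let $\Lambda = \Lambda_0[X^{-1}, Y^{-1}]$. Then $\Lambda$ is a principal ideal domain. -/
/-!
`Λ₀` is the set of power series in `K⟦X, Y⟧`, `K = 𝔽̄_q`, that are periodic under the
coefficientwise Frobenius `φ`. View `K⟦X, Y⟧` as `A⟦X⟧` with `A = K⟦Y⟧`. A nonzero prime `𝔭` of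
`Λ` comes from a nonzero prime `𝔮` of `Λ₀` not containing `Y`. Every nonzero element of `𝔮` is
`Y ^ a` times an element of `𝔮` that is nonzero mod `Y`; choose such a `π` whose reduction mod `Y`
has least `X`-order `d`. For `g ∈ 𝔮`, Weierstrass division `g = π q + r` commutes with `φ` by
uniqueness, so `q, r ∈ Λ₀`. Then `r ∈ 𝔮` is a polynomial in `X` of degree `< d`, so stripping
`Y` off it would contradict the minimality of `d` unless `r = 0`. Hence `𝔮 = (π)`.
-/

open IsLocalRing Function

theorem Function.Semiconj.mem_periodicPts_iff {α β : Type*} {fa : α → α} {fb : β → β}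
    {e : α ≃ β} (h : Semiconj e fa fb) {x : α} : e x ∈ periodicPts fb ↔ x ∈ periodicPts fa :=
  ⟨fun hx => e.symm_apply_apply x ▸
      (h.inverse_left e.left_inv e.right_inv).mapsTo_periodicPts hx,
    fun hx => h.mapsTo_periodicPts hx⟩

theorem IsLocalization.isPrincipalIdealRing_of_isPrime {R : Type*} [CommRing R] (M : Submonoid R)
    (S : Type*) [CommRing S] [Algebra R S] [IsLocalization M S]
    (h : ∀ 𝔮 : Ideal R, 𝔮.IsPrime → Disjoint (M : Set R) 𝔮 → 𝔮.IsPrincipal) :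
    IsPrincipalIdealRing S := by
  refine .of_prime fun P hP => ?_
  obtain ⟨h𝔮, hdisj⟩ := (IsLocalization.isPrime_iff_isPrime_disjoint M S P).mp hP
  obtain ⟨π, hπ⟩ := h _ h𝔮 hdisj
  refine ⟨algebraMap R S π, ?_⟩
  rw [← IsLocalization.map_under M S P, hπ, Ideal.submodule_span_eq, Ideal.map_span,
    Set.image_singleton, Ideal.submodule_span_eq]

namespace PowerSeries

variable {A : Type*} [CommRing A]

theorem C_dvd_iff_forall_dvd_coeff {a : A} {f : A⟦X⟧} : C a ∣ f ↔ ∀ n, a ∣ coeff n f := by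
  refine ⟨fun ⟨g, hg⟩ n => ⟨coeff n g, by rw [hg, coeff_C_mul]⟩, fun h => ?_⟩
  choose c hc using h
  exact ⟨mk c, ext fun n => by rw [coeff_C_mul, coeff_mk, ← hc]⟩

theorem map_residue_eq_zero_iff_C_dvd [IsLocalRing A] {ϖ : A}
    (hϖ : maximalIdeal A = Ideal.span {ϖ}) {f : A⟦X⟧} :
    f.map (residue A) = 0 ↔ C ϖ ∣ f := by
  simp only [C_dvd_iff_forall_dvd_coeff, ← forall_coeff_eq_zero, coeff_map,
    residue_eq_zero_iff, hϖ, Ideal.mem_span_singleton]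

theorem exists_eq_C_pow_mul_and_map_residue_ne_zero [IsDomain A] [IsNoetherianRing A]
    [IsLocalRing A] {ϖ : A} (hϖ : maximalIdeal A = Ideal.span {ϖ}) {f : A⟦X⟧} (hf : f ≠ 0) :
    ∃ (a : ℕ) (f' : A⟦X⟧), f = C ϖ ^ a * f' ∧ f'.map (residue A) ≠ 0 := by
  have hC : ¬IsUnit (C ϖ : A⟦X⟧) := by
    rw [isUnit_iff_constantCoeff, constantCoeff_C, ← mem_nonunits_iff, ← mem_maximalIdeal, hϖ]
    exact Ideal.mem_span_singleton_self ϖ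
  obtain ⟨a, f', hndvd, rfl⟩ := WfDvdMonoid.max_power_factor' hf hC
  exact ⟨a, f', rfl, by rwa [Ne, map_residue_eq_zero_iff_C_dvd hϖ]⟩

theorem order_map_lt_of_coeff_eq_zero {S : Type*} [Semiring S] {φ : A →+* S} {f : A⟦X⟧}
    {n : ℕ} (hf : ∀ m ≥ n, coeff m f = 0) (h : f.map φ ≠ 0) : (f.map φ).order < n := by
  obtain ⟨m, hm⟩ := exists_coeff_ne_zero_iff_ne_zero.mpr h
  have hmn : m < n := by
    by_contra! hnm
    rw [coeff_map, hf m hnm, map_zero] at hm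
    exact hm rfl
  exact (order_le m hm).trans_lt (by exact_mod_cast hmn)

theorem order_map_residue_lt_of_C_mul_eq_weierstrassMod [NoZeroDivisors A] [IsLocalRing A]
    [IsPrecomplete (maximalIdeal A) A] {c : A} (hc : c ≠ 0) {f g π : A⟦X⟧}
    (h : C c * f = (g %ʷ π : Polynomial A)) (hf : f.map (residue A) ≠ 0) :
    (f.map (residue A)).order < (π.map (residue A)).order.toNat := by
  refine order_map_lt_of_coeff_eq_zero (fun m hm => ?_) hf
  have := congr(coeff m $h)
  rwa [coeff_C_mul, Polynomial.coeff_coe, Polynomial.coeff_eq_zero_of_degree_lt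
    ((degree_weierstrassMod_lt g π).trans_le (by exact_mod_cast hm)), mul_eq_zero,
    or_iff_right hc] at this

theorem IsWeierstrassDivision.map_of_map_eq [IsLocalRing A] (σ : A →+* A) {f g q : A⟦X⟧}
    {r : Polynomial A} (H : f.IsWeierstrassDivision g q r) (hg : g.map σ = g) :
    (f.map σ).IsWeierstrassDivision g (q.map σ) (r.map σ) where
  degree_lt := Polynomial.degree_map_le.trans_lt H.degree_lt
  eq_mul_add := by
    rw [H.eq_mul_add, map_add, map_mul, hg, Polynomial.polynomial_map_coe]

theorem map_weierstrassDiv_of_map_eq [IsLocalRing A] [IsAdicComplete (maximalIdeal A) A]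
    (σ : A →+* A) {f g : A⟦X⟧} (hg0 : g.map (residue A) ≠ 0) (hf : f.map σ = f)
    (hg : g.map σ = g) : (f /ʷ g).map σ = f /ʷ g := by
  have H := ((f.isWeierstrassDivision_weierstrassDiv_weierstrassMod hg0).map_of_map_eq σ hg)
  rw [hf] at H
  exact (H.unique hg0).1

theorem iterate_map (σ : A →+* A) (n : ℕ) : (map σ)^[n] = map (σ ^ n) := by
  induction n with
  | zero => rw [iterate_zero, pow_zero, RingHom.one_def, map_id]
  | succ n ih => rw [iterate_succ, ih, pow_succ, RingHom.mul_def, map_comp]; rfl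

theorem weierstrassDiv_mem_periodicPts [IsLocalRing A] [IsAdicComplete (maximalIdeal A) A]
    {σ : A →+* A} {f g : A⟦X⟧} (hg0 : g.map (residue A) ≠ 0) (hf : f ∈ periodicPts (map σ))
    (hg : g ∈ periodicPts (map σ)) : f /ʷ g ∈ periodicPts (map σ) := by
  obtain ⟨m, hm, hfm⟩ := mem_periodicPts.mp hf
  obtain ⟨n, hn, hgn⟩ := mem_periodicPts.mp hg
  refine mk_mem_periodicPts (Nat.mul_pos hm hn) ?_
  have hf' := hfm.mul_const n
  have hg' := hgn.const_mul m
  unfold IsPeriodicPt IsFixedPt at *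
  rw [iterate_map] at *
  exact map_weierstrassDiv_of_map_eq _ hg0 hf' hg'

theorem mem_periodicPts_of_C_mul_mem [IsDomain A] {σ : A →+* A} {ϖ : A} (hϖ0 : ϖ ≠ 0)
    (hϖ : σ ϖ = ϖ) {f : A⟦X⟧} (hf : C ϖ * f ∈ periodicPts (map σ)) :
    f ∈ periodicPts (map σ) := by
  obtain ⟨n, hn, hfn⟩ := mem_periodicPts.mp hf
  refine mk_mem_periodicPts hn ?_
  unfold IsPeriodicPt IsFixedPt at *
  rw [iterate_map, map_mul, map_C, RingHom.coe_pow, (IsFixedPt.iterate hϖ n).eq] at *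
  exact mul_left_cancel₀ ((map_ne_zero_iff _ C_injective).mpr hϖ0) hfn

theorem mem_range_of_C_pow_mul_mem {R : Type*} [CommRing R] {ι : R →+* A⟦X⟧} {ϖ : A}
    (hsat : ∀ f, C ϖ * f ∈ ι.range → f ∈ ι.range) {f : A⟦X⟧} :
    ∀ a : ℕ, C ϖ ^ a * f ∈ ι.range → f ∈ ι.range
  | 0, h => by rwa [pow_zero, one_mul] at h
  | a + 1, h => mem_range_of_C_pow_mul_mem hsat a (hsat _ (by rwa [pow_succ', mul_assoc] at h))

section PrincipalPrimes

variable [IsDomain A] [IsNoetherianRing A] [IsLocalRing A] {R : Type*} [CommRing R]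
  {ι : R →+* A⟦X⟧} {ϖ : A} {ϖR : R} {𝔮 : Ideal R}

theorem exists_mem_map_residue_ne_zero (hι : Injective ι) (hϖ : maximalIdeal A = Ideal.span {ϖ})
    (hsat : ∀ f, C ϖ * f ∈ ι.range → f ∈ ι.range) (hϖR : ι ϖR = C ϖ) (h𝔮 : 𝔮.IsPrime)
    (hϖ𝔮 : ϖR ∉ 𝔮) : ∀ x ∈ 𝔮, x ≠ 0 →
      ∃ y ∈ 𝔮, (ι y).map (residue A) ≠ 0 ∧ ∃ a : ℕ, ι x = C ϖ ^ a * ι y := by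
  intro x hx𝔮 hx0
  obtain ⟨a, f, hxf, hf⟩ :=
    exists_eq_C_pow_mul_and_map_residue_ne_zero hϖ ((map_ne_zero_iff ι hι).mpr hx0)
  obtain ⟨y, rfl⟩ := mem_range_of_C_pow_mul_mem hsat a (by rw [← hxf]; exact ⟨x, rfl⟩)
  have hxy : x = ϖR ^ a * y := hι (by rw [hxf, map_mul, map_pow, hϖR])
  refine ⟨y, ?_, hf, a, hxf⟩
  rw [hxy] at hx𝔮
  exact (h𝔮.mem_or_mem hx𝔮).resolve_left fun h => hϖ𝔮 (h𝔮.mem_of_pow_mem a h)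

theorem isPrincipal_of_isPrime_of_weierstrassDiv_mem [IsAdicComplete (maximalIdeal A) A]
    (hι : Injective ι) (hϖ : maximalIdeal A = Ideal.span {ϖ})
    (hdiv : ∀ f g, f ∈ ι.range → g ∈ ι.range → g.map (residue A) ≠ 0 → f /ʷ g ∈ ι.range)
    (hsat : ∀ f, C ϖ * f ∈ ι.range → f ∈ ι.range) (hϖR : ι ϖR = C ϖ) (h𝔮 : 𝔮.IsPrime)
    (hϖ𝔮 : ϖR ∉ 𝔮) : 𝔮.IsPrincipal := by
  classical
  rcases eq_or_ne 𝔮 ⊥ with rfl | h𝔮0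
  · exact bot_isPrincipal
  have strip := exists_mem_map_residue_ne_zero hι hϖ hsat hϖR h𝔮 hϖ𝔮
  have hex : ∃ d : ℕ, ∃ π ∈ 𝔮, ((ι π).map (residue A)).order = d := by
    obtain ⟨x, hx𝔮, hx0⟩ := Submodule.exists_mem_ne_zero_of_ne_bot h𝔮0
    obtain ⟨y, hy𝔮, hy0, -⟩ := strip x hx𝔮 hx0
    exact ⟨_, y, hy𝔮, (coe_toNat_order hy0).symm⟩
  -- The generator: an element of `𝔮` that is nonzero mod `ϖ`, of least order mod `ϖ`.
  obtain ⟨π, hπ𝔮, hπd⟩ := Nat.find_spec hex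
  have hπ0 : (ι π).map (residue A) ≠ 0 := by
    rw [Ne, ← order_eq_top, hπd]
    exact ENat.natCast_ne_top _
  refine ⟨π, le_antisymm (fun g hg => ?_) ((Ideal.span_singleton_le_iff_mem _).mpr hπ𝔮)⟩
  obtain ⟨q, hq⟩ := hdiv _ _ ⟨g, rfl⟩ ⟨π, rfl⟩ hπ0
  have hr𝔮 : g - π * q ∈ 𝔮 := 𝔮.sub_mem hg (𝔮.mul_mem_right q hπ𝔮)
  have hιr : ι (g - π * q) = ((ι g %ʷ ι π : Polynomial A) : A⟦X⟧) := by
    rw [map_sub, map_mul, hq, sub_eq_iff_eq_add', ← eq_mul_weierstrassDiv_add_weierstrassMod _ hπ0]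
  rcases eq_or_ne (g - π * q) 0 with hr0 | hr0
  · exact Ideal.mem_span_singleton'.mpr ⟨q, by rw [mul_comm, (sub_eq_zero.mp hr0)]⟩
  obtain ⟨y, hy𝔮, hy0, a, hry⟩ := strip _ hr𝔮 hr0
  rw [← map_pow] at hry
  have hϖa : ϖ ^ a ≠ 0 := fun h => hr0 (hι (by rw [hry, h, map_zero, zero_mul, map_zero]))
  have hlt := order_map_residue_lt_of_C_mul_eq_weierstrassMod hϖa (hry.symm.trans hιr) hy0
  rw [hπd, ENat.toNat_natCast, ← coe_toNat_order hy0, Nat.cast_lt] at hlt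
  exact absurd (Nat.find_min' hex ⟨y, hy𝔮, (coe_toNat_order hy0).symm⟩) (not_le.mpr hlt)

end PrincipalPrimes

end PowerSeries

namespace MvPowerSeries

instance {σ R : Type*} [CommRing R] [IsDomain R] : IsDomain (MvPowerSeries σ R) :=
  NoZeroDivisors.to_isDomain _

variable {K : Type*} [Field K]

theorem maximalIdeal_eq_span_X_zero :
    maximalIdeal (MvPowerSeries (Fin 1) K) = Ideal.span {X 0} := by
  ext f
  rw [mem_maximalIdeal, mem_nonunits_iff, isUnit_iff_constantCoeff, isUnit_iff_ne_zero,
    not_not, Ideal.mem_span_singleton, X_dvd_iff]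
  refine ⟨fun hf m hm => ?_, fun hf => hf 0 rfl⟩
  rwa [show m = 0 from Finsupp.ext fun i => by rwa [Subsingleton.elim i 0]]

instance : IsAdicComplete (maximalIdeal (MvPowerSeries (Fin 1) K))
    (MvPowerSeries (Fin 1) K) := by
  rw [maximalIdeal_eq_span_X_zero,
    show ({X 0} : Set (MvPowerSeries (Fin 1) K)) = Set.range X from Set.range_unique.symm]
  infer_instance

theorem finSuccEquiv_map {R : Type*} [CommRing R] {n : ℕ} (φ : R →+* R)
    (f : MvPowerSeries (Fin (n + 1)) R) :
    finSuccEquiv R n (map φ f) = PowerSeries.map (map φ) (finSuccEquiv R n f) := by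
  ext k x
  simp only [coeff_coeff_finSuccEquiv, PowerSeries.coeff_map, coeff_map]

theorem X_ne_zero {σ R : Type*} [CommRing R] [Nontrivial R] (s : σ) :
    (X s : MvPowerSeries σ R) ≠ 0 := fun h => by
  simpa [coeff_X] using congr(coeff (Finsupp.single s 1) $h)

theorem coeff_iterate_map {σ R : Type*} [CommRing R] (φ : R →+* R) (n : ℕ) (d : σ →₀ ℕ)
    (f : MvPowerSeries σ R) : coeff d ((map φ)^[n] f) = φ^[n] (coeff d f) :=
  Semiconj.iterate_right (fun g => coeff_map φ d g) n f

theorem mem_periodicPts_map_frobeniusAlgHom_iff (F : Type*) [Field F] [Fintype F]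
    {K σ : Type*} [Field K] [Algebra F K] (f : MvPowerSeries σ K) :
    f ∈ periodicPts (map (FiniteField.frobeniusAlgHom F K : K →+* K)) ↔
      ∃ n : ℕ, 1 ≤ n ∧ ∀ d, coeff d f ^ Fintype.card F ^ n = coeff d f := by
  simp only [mem_periodicPts, IsPeriodicPt, IsFixedPt, MvPowerSeries.ext_iff, coeff_iterate_map,
    AlgHom.coe_toRingHom, FiniteField.coe_frobeniusAlgHom, pow_iterate]
  exact Iff.rfl

theorem isPrincipal_of_isPrime_of_X_one_notMem {σ : K →+* K}
    {Λ₀ : Subring (MvPowerSeries (Fin 2) K)}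
    (hΛ₀ : (Λ₀ : Set (MvPowerSeries (Fin 2) K)) = periodicPts (map σ)) (hX : X 1 ∈ Λ₀)
    {𝔮 : Ideal Λ₀} (h𝔮 : 𝔮.IsPrime) (hX𝔮 : ⟨X 1, hX⟩ ∉ 𝔮) : 𝔮.IsPrincipal := by
  -- `e` views `K⟦X₀, X₁⟧` as `A⟦X₀⟧` over the complete DVR `A = K⟦X₁⟧` with uniformizer `X₁`.
  set e := finSuccEquiv K 1
  let ι : Λ₀ →+* PowerSeries (MvPowerSeries (Fin 1) K) := (e : _ →+* _).comp Λ₀.subtype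
  have he : Semiconj e.toEquiv (map σ) (PowerSeries.map (map σ)) := finSuccEquiv_map σ
  have hrange : ∀ g, g ∈ ι.range ↔ g ∈ periodicPts (PowerSeries.map (map σ)) := by
    refine fun g => ⟨?_, fun hg => ⟨⟨e.symm g, ?_⟩, e.apply_symm_apply g⟩⟩
    · rintro ⟨x, rfl⟩
      exact he.mem_periodicPts_iff.mpr (hΛ₀ ▸ x.2)
    · rw [← SetLike.mem_coe, hΛ₀, ← he.mem_periodicPts_iff]
      simpa using hg
  refine PowerSeries.isPrincipal_of_isPrime_of_weierstrassDiv_mem (ι := ι)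
    (e.injective.comp Subtype.val_injective) maximalIdeal_eq_span_X_zero
    (fun f g hf hg hg0 => ?_) (fun f hf => ?_)
    (finSuccEquiv_X_succ 0) h𝔮 hX𝔮
  · exact (hrange _).mpr
      (PowerSeries.weierstrassDiv_mem_periodicPts hg0 ((hrange f).mp hf) ((hrange g).mp hg))
  · exact (hrange f).mpr
      (PowerSeries.mem_periodicPts_of_C_mul_mem (X_ne_zero 0) (map_X σ 0) ((hrange _).mp hf))

end MvPowerSeries

/-- Let `F = 𝔽_q` be a finite field with algebraic closure `K`, and let
`Λ₀ ⊆ K[[X,Y]]` be the subring whose carrier is the union of the subrings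
`𝔽_{q^n}[[X,Y]]` (power series all of whose coefficients satisfy `c^{q^n} = c` for some
`n ≥ 1`).  Let `Λ = Λ₀[X⁻¹, Y⁻¹]` be the localization of `Λ₀` at the multiplicative
monoid generated by `X` and `Y`.  Then `Λ` is a principal ideal domain. -/
theorem stmt8 (F : Type*) [Field F] [Fintype F]
    (Λ₀ : Subring (MvPowerSeries (Fin 2) (AlgebraicClosure F)))
    (hΛ₀ : (Λ₀ : Set (MvPowerSeries (Fin 2) (AlgebraicClosure F))) =
      {f | ∃ n : ℕ, 1 ≤ n ∧ ∀ d,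
        (MvPowerSeries.coeff d f) ^ (Fintype.card F) ^ n =
          MvPowerSeries.coeff d f})
    (Λ : Type*) [CommRing Λ] [Algebra Λ₀ Λ]
    [IsLocalization
      (Submonoid.closure {x : Λ₀ |
        (x : MvPowerSeries (Fin 2) (AlgebraicClosure F)) = MvPowerSeries.X 0 ∨
        (x : MvPowerSeries (Fin 2) (AlgebraicClosure F)) = MvPowerSeries.X 1}) Λ] :
    IsDomain Λ ∧ IsPrincipalIdealRing Λ := by
  have hΛ₀' : (Λ₀ : Set (MvPowerSeries (Fin 2) (AlgebraicClosure F))) =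
      periodicPts (MvPowerSeries.map
        (FiniteField.frobeniusAlgHom F (AlgebraicClosure F) : _ →+* _)) := by
    ext f
    rw [hΛ₀, MvPowerSeries.mem_periodicPts_map_frobeniusAlgHom_iff]
    rfl
  have hX (i : Fin 2) : MvPowerSeries.X i ∈ Λ₀ := by
    rw [← SetLike.mem_coe, hΛ₀']
    exact mk_mem_periodicPts one_pos (MvPowerSeries.map_X _ i)
  obtain ⟨M, _, hM0, hXM⟩ : ∃ M : Submonoid Λ₀,
      IsLocalization M Λ ∧ M ≤ nonZeroDivisors Λ₀ ∧ ⟨_, hX 1⟩ ∈ M := by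
    refine ⟨_, ‹_›, Submonoid.closure_le.mpr ?_, Submonoid.subset_closure (Or.inr rfl)⟩
    rintro x (hx | hx) <;>
      exact mem_nonZeroDivisors_of_ne_zero fun h0 =>
        MvPowerSeries.X_ne_zero _ (by rw [← hx, h0]; rfl)
  exact ⟨IsLocalization.isDomain_of_le_nonZeroDivisors Λ hM0,
    IsLocalization.isPrincipalIdealRing_of_isPrime M Λ fun 𝔮 h𝔮 hdisj =>
      MvPowerSeries.isPrincipal_of_isPrime_of_X_one_notMem hΛ₀' (hX 1) h𝔮
        (Set.disjoint_left.mp hdisj hXM)⟩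
end

section
/- Let $q$ be a prime power and $N \geq 0$ an integer. In $\mathbb{F}_q[T]$, the product of all monic polynomials of degree $N$ equals $\prod_{i=0}^{N-1}(T^{q^N} - T^{q^i})$. -/
open scoped BigOperators
open Polynomial Finset
set_option linter.unusedSectionVars false

section
variable {𝔽 : Type*} [Field 𝔽] [Fintype 𝔽]

noncomputable def polC (N : ℕ) (c : Fin N → 𝔽) : Polynomial 𝔽 :=
  ∑ i : Fin N, C (c i) * X ^ (i : ℕ)

lemma polC_coeff (N : ℕ) (c : Fin N → 𝔽) (k : ℕ) :
    (polC N c).coeff k = if h : k < N then c ⟨k, h⟩ else 0 := by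
  classical
  rw [polC, finset_sum_coeff]
  simp only [coeff_C_mul, coeff_X_pow, mul_ite, mul_one, mul_zero]
  split_ifs with h
  · rw [Finset.sum_eq_single (⟨k, h⟩ : Fin N)]
    · simp
    · intro b _ hb
      rw [if_neg]
      intro hbk
      exact hb (by ext; exact hbk.symm)
    · simp
  · apply Finset.sum_eq_zero
    intro i _
    have := i.isLt
    rw [if_neg]
    omega

lemma polC_inj (N : ℕ) : Function.Injective (polC (𝔽 := 𝔽) N) := by
  intro c c' h
  funext i
  have := congrArg (fun g => Polynomial.coeff g (i : ℕ)) h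
  simpa [polC_coeff, i.isLt] using this

lemma polC_degree (N : ℕ) (c : Fin N → 𝔽) : (polC N c).degree < (N : ℕ) := by
  apply lt_of_le_of_lt (degree_sum_le _ _)
  rw [Finset.sup_lt_iff (by exact_mod_cast WithBot.bot_lt_coe N)]
  intro i _
  calc (C (c i) * X ^ (i : ℕ)).degree ≤ ((i : ℕ) : WithBot ℕ) := by
        rw [C_mul_X_pow_eq_monomial]; exact degree_monomial_le _ _
    _ < ((N : ℕ) : WithBot ℕ) := by exact_mod_cast i.isLt

lemma polC_neg (N : ℕ) (c : Fin N → 𝔽) : polC N (-c) = - polC N c := by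
  simp [polC, Finset.sum_neg_distrib]

lemma monic_set_eq (N : ℕ) :
    {f : Polynomial 𝔽 | f.Monic ∧ f.natDegree = N} =
      Set.range (fun c : Fin N → 𝔽 => X ^ N + polC N c) := by
  ext f
  simp only [Set.mem_setOf_eq, Set.mem_range]
  constructor
  · rintro ⟨hm, hd⟩
    refine ⟨fun i => f.coeff (i : ℕ), ?_⟩
    ext k
    rw [coeff_add, coeff_X_pow, polC_coeff]
    rcases lt_trichotomy k N with h | h | h
    · rw [dif_pos h, if_neg (by omega)]; simp
    · subst h
      rw [dif_neg (by omega), if_pos rfl]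
      have : f.coeff k = 1 := by
        have := hm.coeff_natDegree
        rwa [hd] at this
      simp [this]
    · rw [dif_neg (by omega), if_neg (by omega)]
      rw [coeff_eq_zero_of_natDegree_lt (by omega : f.natDegree < k)]
      simp
  · rintro ⟨c, rfl⟩
    have hdeg : (polC N c).degree < (X ^ N : Polynomial 𝔽).degree := by
      rw [degree_X_pow]; exact polC_degree N c
    constructor
    · exact (monic_X_pow N).add_of_left hdeg
    · rw [natDegree_add_eq_left_of_degree_lt hdeg, natDegree_X_pow]
end


section
variable {𝔽 : Type*} [Field 𝔽] [Fintype 𝔽]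

lemma sum_pow_card_pow' {ι : Type*} (s : Finset ι) (f : ι → Polynomial 𝔽) (j : ℕ) :
    (∑ i ∈ s, f i) ^ (Fintype.card 𝔽) ^ j = ∑ i ∈ s, (f i) ^ (Fintype.card 𝔽) ^ j := by
  have hp : (ringChar 𝔽).Prime := CharP.char_is_prime 𝔽 (ringChar 𝔽)
  obtain ⟨n, -, hcard⟩ := FiniteField.card 𝔽 (ringChar 𝔽)
  haveI : CharP (Polynomial 𝔽) (ringChar 𝔽) := Polynomial.instCharP _
  haveI : ExpChar (Polynomial 𝔽) (ringChar 𝔽) := ExpChar.prime hp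
  simp only [hcard, ← pow_mul]
  apply sum_pow_char_pow
end

section
variable {𝔽 : Type*} [Field 𝔽] [Fintype 𝔽]

lemma polC2_pow (N : ℕ) (c : Fin N → 𝔽) (j : ℕ) :
    (∑ i : Fin N, C (c i) * X ^ (i : ℕ)) ^ (Fintype.card 𝔽) ^ j =
      ∑ i : Fin N, C (c i) * (X ^ (i : ℕ)) ^ (Fintype.card 𝔽) ^ j := by
  rw [sum_pow_card_pow']
  congr 1; funext i
  rw [mul_pow, ← map_pow, FiniteField.pow_card_pow]
end

noncomputable def moore (q : ℕ) {m : ℕ} {S : Type*} [CommRing S] (w : Fin m → S) :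
    Matrix (Fin m) (Fin m) S := Matrix.of fun i j => (w i) ^ q ^ (j : ℕ)

lemma det_moore_pow {S : Type*} [CommRing S] (q m : ℕ) (x : S) :
    (moore q (fun i : Fin m => x ^ (i : ℕ))).det
      = ∏ i : Fin m, ∏ j ∈ Finset.Ioi i, (x ^ q ^ (j : ℕ) - x ^ q ^ (i : ℕ)) := by
  rw [← Matrix.det_vandermonde (fun j : Fin m => x ^ q ^ (j : ℕ)), ← Matrix.det_transpose]
  congr 1
  ext i j
  simp [moore, Matrix.vandermonde, ← pow_mul, mul_comm]

lemma fin_pairs_eq {S : Type*} [CommMonoid S] (m : ℕ) (f : ℕ → ℕ → S) :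
    (∏ i : Fin m, ∏ j ∈ Finset.Ioi i, f (i : ℕ) (j : ℕ)) =
      ∏ j ∈ Finset.range m, ∏ i ∈ Finset.range j, f i j := by
  rw [Finset.prod_sigma', Finset.prod_sigma']
  apply Finset.prod_bij (fun (x : Σ _ : Fin m, Fin m) _ => (⟨(x.2 : ℕ), (x.1 : ℕ)⟩ : Σ _ : ℕ, ℕ))
  · rintro ⟨a, b⟩ hx
    simp only [Finset.mem_sigma, Finset.mem_univ, Finset.mem_Ioi, true_and] at hx
    simp only [Finset.mem_sigma, Finset.mem_range]
    exact ⟨b.isLt, hx⟩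
  · rintro ⟨a, b⟩ hx ⟨a', b'⟩ hx' h
    rw [Sigma.mk.inj_iff] at h
    obtain ⟨h1, h2⟩ := h
    have h2' : (a : ℕ) = (a' : ℕ) := eq_of_heq h2
    have ha : a = a' := Fin.ext h2'
    have hb : b = b' := Fin.ext h1
    subst ha; subst hb; rfl
  · rintro ⟨a, b⟩ hb
    simp only [Finset.mem_sigma, Finset.mem_range] at hb
    refine ⟨⟨⟨b, lt_trans hb.2 hb.1⟩, ⟨a, hb.1⟩⟩, ?_, rfl⟩
    simp only [Finset.mem_sigma, Finset.mem_univ, Finset.mem_Ioi, true_and]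
    exact hb.2
  · rintro ⟨a, b⟩ hx
    rfl

lemma prod_pairs_split {S : Type*} [CommMonoid S] (m : ℕ) (f : ℕ → ℕ → S) :
    (∏ i : Fin (m+1), ∏ j ∈ Finset.Ioi i, f (i : ℕ) (j : ℕ)) =
      (∏ i : Fin m, ∏ j ∈ Finset.Ioi i, f (i : ℕ) (j : ℕ)) * ∏ i ∈ Finset.range m, f i m := by
  rw [fin_pairs_eq, fin_pairs_eq, Finset.prod_range_succ]

lemma term_natDegree_le {R : Type*} [CommRing R] [Nontrivial R] (k e : ℕ) (a : R) :
    ((-1 : Polynomial R) ^ k * X ^ e * C a).natDegree ≤ e := by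
  apply le_trans natDegree_mul_le
  rw [natDegree_C, add_zero]
  apply le_trans natDegree_mul_le
  rw [natDegree_X_pow]
  have h1 : ((-1 : Polynomial R)) ^ k = C ((-1) ^ k) := by
    rw [map_pow, map_neg, C_1]
  rw [h1, natDegree_C, zero_add]

section
variable (𝔽 : Type*) [Field 𝔽] [Fintype 𝔽]

noncomputable def WW (N : ℕ) : Fin (N+1) → Polynomial (Polynomial 𝔽) :=
  fun i => if (i : ℕ) < N then C ((X : Polynomial 𝔽) ^ (i : ℕ)) else X

noncomputable def Fdet (N : ℕ) : Polynomial (Polynomial 𝔽) :=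
  (moore (Fintype.card 𝔽) (WW 𝔽 N)).det

noncomputable def Dl (N : ℕ) : Polynomial 𝔽 :=
  (moore (Fintype.card 𝔽) (fun i : Fin N => (X : Polynomial 𝔽) ^ (i : ℕ))).det

lemma eval_Fdet (N : ℕ) (b : Polynomial 𝔽) :
    (Fdet 𝔽 N).eval b =
      (moore (Fintype.card 𝔽) (fun i : Fin (N+1) =>
        if (i : ℕ) < N then (X : Polynomial 𝔽) ^ (i : ℕ) else b)).det := by
  have h0 : (Fdet 𝔽 N).eval b = (Polynomial.evalRingHom b) (Fdet 𝔽 N) := rfl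
  rw [h0, Fdet, RingHom.map_det]
  congr 1
  refine Matrix.ext fun i j => ?_
  simp only [RingHom.mapMatrix_apply, Matrix.map_apply, moore, Matrix.of_apply, WW,
    coe_evalRingHom, eval_pow]
  by_cases h : (i : ℕ) < N
  · rw [if_pos h, if_pos h, eval_C]
  · rw [if_neg h, if_neg h, eval_X]

lemma Fdet_eq_sum (N : ℕ) : Fdet 𝔽 N = ∑ j : Fin (N+1),
    (-1) ^ (N + (j : ℕ)) * X ^ (Fintype.card 𝔽) ^ (j : ℕ) *
      C ((Matrix.of fun i' j' : Fin N => ((X : Polynomial 𝔽) ^ (i' : ℕ)) ^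
          (Fintype.card 𝔽) ^ ((j.succAbove j' : Fin (N+1)) : ℕ)).det) := by
  rw [Fdet, Matrix.det_succ_row _ (Fin.last N)]
  refine Finset.sum_congr rfl fun j _ => ?_
  have h1 : (moore (Fintype.card 𝔽) (WW 𝔽 N)) (Fin.last N) j
      = X ^ (Fintype.card 𝔽) ^ (j : ℕ) := by
    simp [moore, WW]
  have h2 : ((moore (Fintype.card 𝔽) (WW 𝔽 N)).submatrix (Fin.last N).succAbove j.succAbove)
      = (Matrix.of fun i' j' : Fin N => ((X : Polynomial 𝔽) ^ (i' : ℕ)) ^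
          (Fintype.card 𝔽) ^ ((j.succAbove j' : Fin (N+1)) : ℕ)).map C := by
    refine Matrix.ext fun i' j' => ?_
    simp only [Matrix.submatrix_apply, Matrix.map_apply, Matrix.of_apply, moore,
      Fin.succAbove_last, WW]
    rw [if_pos (by simp [Fin.coe_castSucc, i'.isLt] : ((Fin.castSucc i' : Fin (N+1)) : ℕ) < N)]
    rw [Fin.coe_castSucc]
    exact (map_pow C ((X : Polynomial 𝔽) ^ (i' : ℕ)) _).symm
  have h3 : ((Matrix.of fun i' j' : Fin N => ((X : Polynomial 𝔽) ^ (i' : ℕ)) ^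
          (Fintype.card 𝔽) ^ ((j.succAbove j' : Fin (N+1)) : ℕ)).map ⇑C).det
      = C ((Matrix.of fun i' j' : Fin N => ((X : Polynomial 𝔽) ^ (i' : ℕ)) ^
          (Fintype.card 𝔽) ^ ((j.succAbove j' : Fin (N+1)) : ℕ)).det) := by
    rw [RingHom.map_det, RingHom.mapMatrix_apply]
  rw [h1, h2, h3, Fin.val_last]

lemma natDegree_Fdet_le (N : ℕ) : (Fdet 𝔽 N).natDegree ≤ (Fintype.card 𝔽) ^ N := by
  rw [Fdet_eq_sum]
  apply natDegree_sum_le_of_forall_le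
  intro j _
  apply le_trans (term_natDegree_le _ _ _)
  exact Nat.pow_le_pow_right Fintype.card_pos (Nat.lt_succ_iff.mp j.isLt)

lemma coeff_Fdet (N : ℕ) :
    (Fdet 𝔽 N).coeff ((Fintype.card 𝔽) ^ N) = Dl 𝔽 N := by
  have hq1 : 1 < Fintype.card 𝔽 := Fintype.one_lt_card
  rw [Fdet_eq_sum, finset_sum_coeff]
  rw [Fin.sum_univ_castSucc]
  have hzero : ∀ j : Fin N,
      ((-1) ^ (N + ((Fin.castSucc j : Fin (N+1)) : ℕ)) * X ^ (Fintype.card 𝔽) ^ ((Fin.castSucc j : Fin (N+1)) : ℕ) *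
        C ((Matrix.of fun i' j' : Fin N => ((X : Polynomial 𝔽) ^ (i' : ℕ)) ^
          (Fintype.card 𝔽) ^ (((Fin.castSucc j).succAbove j' : Fin (N+1)) : ℕ)).det)).coeff ((Fintype.card 𝔽) ^ N) = 0 := by
    intro j
    apply coeff_eq_zero_of_natDegree_lt
    apply lt_of_le_of_lt (term_natDegree_le _ _ _)
    exact Nat.pow_lt_pow_right hq1 (by simpa using j.isLt)
  rw [Finset.sum_eq_zero (fun j _ => hzero j), zero_add]
  have hlast : ((Fin.last N : Fin (N+1)) : ℕ) = N := rfl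
  rw [hlast]
  have hsign : ((-1 : Polynomial (Polynomial 𝔽)) ^ (N + N)) = 1 := by
    rw [← two_mul, pow_mul]
    norm_num
  rw [hsign, one_mul, mul_comm, coeff_C_mul, coeff_X_pow, if_pos rfl, mul_one]
  rw [Dl]
  congr 1
  refine Matrix.ext fun i' j' => ?_
  simp [moore, Fin.succAbove_last]

end

section
variable (𝔽 : Type*) [Field 𝔽] [Fintype 𝔽]

lemma eval_Fdet_polC (N : ℕ) (c : Fin N → 𝔽) :
    (Fdet 𝔽 N).eval (polC N c) = 0 := by
  classical
  rw [eval_Fdet]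
  set b := polC N c with hb
  set M := moore (Fintype.card 𝔽) (fun i : Fin (N+1) =>
    if (i : ℕ) < N then (X : Polynomial 𝔽) ^ (i : ℕ) else b) with hM
  set d : Fin (N+1) → Polynomial 𝔽 := fun k => if h : (k : ℕ) < N then C (c ⟨k, h⟩) else 0 with hd
  have hrow : M (Fin.last N) = ∑ k : Fin (N+1), d k • M k := by
    funext j
    have hb1 : M (Fin.last N) j = b ^ (Fintype.card 𝔽) ^ (j : ℕ) := by
      simp [hM, moore]
    have hsum : (∑ k : Fin (N+1), d k • M k) j = ∑ k : Fin (N+1), d k * M k j := by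
      simp [Finset.sum_apply]
    rw [hb1, hsum, hb, polC, polC2_pow, Fin.sum_univ_castSucc]
    have hlastz : d (Fin.last N) = 0 := by simp [hd]
    rw [hlastz, zero_mul, add_zero]
    congr 1
    funext k
    have h1 : ((Fin.castSucc k : Fin (N+1)) : ℕ) < N := by simpa using k.isLt
    have h2 : d (Fin.castSucc k) = C (c k) := by
      simp only [hd, Fin.coe_castSucc, Fin.eta, dif_pos k.isLt]
    have h3 : M (Fin.castSucc k) j
        = ((X : Polynomial 𝔽) ^ (k : ℕ)) ^ (Fintype.card 𝔽) ^ (j : ℕ) := by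
      simp [hM, moore, h1]
    rw [h2, h3]
  have h2 := Matrix.det_updateRow_sum M (Fin.last N) d
  rw [← hrow, Matrix.updateRow_eq_self] at h2
  simpa [hd] using h2

end

section
variable (𝔽 : Type*) [Field 𝔽] [Fintype 𝔽]

lemma Fdet_eq (N : ℕ) :
    Fdet 𝔽 N = C (Dl 𝔽 N) * ∏ c : Fin N → 𝔽, (X - C (polC N c)) := by
  classical
  set q := Fintype.card 𝔽 with hq
  set H := ∏ c : Fin N → 𝔽, ((X : Polynomial (Polynomial 𝔽)) - C (polC N c)) with hH
  have hHmonic : H.Monic := monic_prod_of_monic _ _ (fun c _ => monic_X_sub_C _)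
  have hcardfun : Fintype.card (Fin N → 𝔽) = q ^ N := by
    rw [Fintype.card_fun, Fintype.card_fin]
  have hHdeg : H.natDegree = q ^ N := by
    rw [hH, natDegree_prod _ _ (fun c _ => X_sub_C_ne_zero _)]
    simp only [natDegree_X_sub_C]
    rw [Finset.sum_const, smul_eq_mul, mul_one, Finset.card_univ, hcardfun]
  have hcoeffH : H.coeff (q ^ N) = 1 := by
    have h := hHmonic.coeff_natDegree
    rwa [hHdeg] at h
  set G := Fdet 𝔽 N - C (Dl 𝔽 N) * H with hG
  have hcoeffG : G.coeff (q ^ N) = 0 := by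
    rw [hG, coeff_sub, coeff_C_mul, hcoeffH, mul_one, coeff_Fdet, sub_self]
  have hdegG : G.natDegree ≤ q ^ N := by
    apply le_trans (natDegree_sub_le _ _)
    apply max_le (natDegree_Fdet_le 𝔽 N)
    apply le_trans natDegree_mul_le
    rw [natDegree_C, hHdeg, zero_add]
  have hevalG : ∀ c : Fin N → 𝔽, G.eval (polC N c) = 0 := by
    intro c
    rw [hG, eval_sub, eval_Fdet_polC, eval_mul, eval_C]
    have h : H.eval (polC N c) = 0 := by
      rw [hH, eval_prod]
      apply Finset.prod_eq_zero (Finset.mem_univ c)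
      rw [eval_sub, eval_X, eval_C, sub_self]
    rw [h, mul_zero, sub_zero]
  have hG0 : G = 0 := by
    by_contra hne
    have hne' : G.natDegree ≠ q ^ N := by
      intro h
      apply hne
      rw [← leadingCoeff_eq_zero, leadingCoeff, h]
      exact hcoeffG
    exact hne (Polynomial.eq_zero_of_natDegree_lt_card_of_eval_eq_zero G (polC_inj N)
      hevalG (by rw [hcardfun]; exact lt_of_le_of_ne hdegG hne'))
  exact sub_eq_zero.mp (hG.symm.trans hG0)

end

/-- Carlitz factorial identity: in `𝔽_q[T]`, the product of all monic polynomials of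
degree exactly `N` equals `∏_{i=0}^{N-1} (T^{q^N} - T^{q^i})`. -/
theorem stmt11 (𝔽 : Type*) [Field 𝔽] [Fintype 𝔽] (q : ℕ) (hq : q = Fintype.card 𝔽)
    (N : ℕ) :
    (∏ᶠ f ∈ {f : Polynomial 𝔽 | f.Monic ∧ f.natDegree = N}, f) =
      ∏ i ∈ Finset.range N,
        ((Polynomial.X : Polynomial 𝔽) ^ q ^ N - Polynomial.X ^ q ^ i) := by
  subst hq
  classical
  have hq2 : 2 ≤ Fintype.card 𝔽 := Fintype.one_lt_card
  -- LHS conversion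
  have hinj : Function.Injective (fun c : Fin N → 𝔽 => X ^ N + polC N c) := by
    intro c c' h
    exact polC_inj N (by simpa using h)
  rw [monic_set_eq, finprod_mem_range hinj, finprod_eq_prod_of_fintype]
  have hneg : (∏ c : Fin N → 𝔽, ((X : Polynomial 𝔽) ^ N + polC N c))
      = ∏ c : Fin N → 𝔽, ((X : Polynomial 𝔽) ^ N - polC N c) := by
    rw [← Equiv.prod_comp (Equiv.neg (Fin N → 𝔽)) (fun c => (X : Polynomial 𝔽) ^ N + polC N c)]
    apply Finset.prod_congr rfl
    intro c _
    show (X : Polynomial 𝔽) ^ N + polC N (-c) = _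
    rw [polC_neg, ← sub_eq_add_neg]
  rw [hneg]
  -- key evaluation
  have hW : (fun i : Fin (N+1) => if (i : ℕ) < N then (X : Polynomial 𝔽) ^ (i : ℕ) else X ^ N)
      = fun i : Fin (N+1) => (X : Polynomial 𝔽) ^ (i : ℕ) := by
    funext i
    split_ifs with h
    · rfl
    · have h2 : (i : ℕ) = N := by have := i.isLt; omega
      rw [h2]
  have hkey : (∏ i : Fin (N+1), ∏ j ∈ Finset.Ioi i,
        ((X : Polynomial 𝔽) ^ (Fintype.card 𝔽) ^ (j : ℕ) - X ^ (Fintype.card 𝔽) ^ (i : ℕ)))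
      = Dl 𝔽 N * ∏ c : Fin N → 𝔽, ((X : Polynomial 𝔽) ^ N - polC N c) := by
    have h := congrArg (Polynomial.eval ((X : Polynomial 𝔽) ^ N)) (Fdet_eq 𝔽 N)
    rw [eval_Fdet, hW, det_moore_pow, eval_mul, eval_C, eval_prod] at h
    simp only [eval_sub, eval_X, eval_C] at h
    exact h
  have hDl : Dl 𝔽 N = ∏ i : Fin N, ∏ j ∈ Finset.Ioi i,
      ((X : Polynomial 𝔽) ^ (Fintype.card 𝔽) ^ (j : ℕ) - X ^ (Fintype.card 𝔽) ^ (i : ℕ)) := by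
    rw [Dl, det_moore_pow]
  have hsplit := prod_pairs_split N
    (fun a b => (X : Polynomial 𝔽) ^ (Fintype.card 𝔽) ^ b - X ^ (Fintype.card 𝔽) ^ a)
  have hDl0 : Dl 𝔽 N ≠ 0 := by
    rw [hDl]
    apply Finset.prod_ne_zero_iff.mpr
    intro i _
    apply Finset.prod_ne_zero_iff.mpr
    intro j hj
    apply sub_ne_zero_of_ne
    intro h
    have h2 := congrArg natDegree h
    rw [natDegree_X_pow, natDegree_X_pow] at h2
    have h3 := Nat.pow_right_injective hq2 h2
    have h4 : i < j := Finset.mem_Ioi.mp hj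
    exact absurd (Fin.ext h3) (ne_of_gt h4)
  apply mul_left_cancel₀ hDl0
  rw [← hkey, hsplit, ← hDl]
end

section
/- Let $k$ be a local field of characteristic $p>0$, $L \subset k$ a discrete cocompact subgroup, $\ell \in k$, $w \in k$, $r \in k^\times$. Then the function $a \mapsto \#\big((\ell + L) \cap a(w + r\mathcal{O})\big)$ from $k^\times$ to $\mathbb{Z}$ is locally constant, equals $\mathbf{1}_{\ell \in L}\cdot\mathbf{1}_{w \in r\mathcal{O}}$ (i.e., $1$ if $\ell \in L$ and $0 \in w + r\mathcal{O}$, else $0$) for $\|a\|$ sufficiently small. -/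
/-!
For `ε` close to `0`, `1 + ε` is a unit of `O` and `ε w ∈ r O`, so multiplying by `1 + ε` maps
`w + r O` onto itself; since `ε ↦ a (1 + ε)` is a homeomorphism, the counted set is constant
near every `a ≠ 0`. Inside the compact ring `O`, a non-unit `x` has `xⁿ → 0` (the closure of
its powers is a compact semigroup, whose idempotent must be `0`), and then the partial sums of
`∑ xⁿ` cluster at an inverse of `1 - x`; as the units of `O` form a closed set, this makes
`1 + ε` a unit for small `ε`.

For small `a`, the compact set `a (w + r O)` lies in a neighbourhood of `0` that meets the
closed discrete set `ℓ + L` at most in `0`, which is in it exactly when `ℓ ∈ L`.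
-/

open Filter Topology Set

theorem IsCompact.eventually_forall_mul_mem {M : Type*} [MulZeroClass M] [TopologicalSpace M]
    [ContinuousMul M] {K : Set M} (hK : IsCompact K) {W : Set M} (hW : W ∈ 𝓝 0) :
    ∀ᶠ x in 𝓝 0, ∀ y ∈ K, x * y ∈ W :=
  hK.eventually_forall_of_forall_eventually fun y _ ↦
    (continuous_mul.tendsto ((0 : M), y)).eventually (by simpa using hW)

section CompactRing

variable {R : Type*} [CommRing R] [TopologicalSpace R] [IsTopologicalRing R] [CompactSpace R]

theorem tendsto_pow_atTop_nhds_zero_of_zero_mem_closure {x : R}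
    (hx : (0 : R) ∈ closure (range fun n : ℕ ↦ x ^ (n + 1))) :
    Tendsto (x ^ ·) atTop (𝓝 0) := by
  intro W hW
  obtain ⟨V, hV, hVW⟩ := (isCompact_univ.eventually_forall_mul_mem hW).exists_mem
  obtain ⟨_, hmV, m, rfl⟩ := mem_closure_iff_nhds.mp hx V hV
  refine mem_map.mpr (mem_of_superset (Ici_mem_atTop (m + 1)) fun n hn ↦ ?_)
  simpa [← pow_add, Nat.add_sub_cancel' (mem_Ici.mp hn)] using
    hVW _ hmV (x ^ (n - (m + 1))) (mem_univ _)

theorem isUnit_or_tendsto_pow_atTop_nhds_zero [T2Space R] [IsDomain R] (x : R) :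
    IsUnit x ∨ Tendsto (x ^ ·) atTop (𝓝 0) := by
  set S := closure (range fun n : ℕ ↦ x ^ (n + 1))
  have hS_mul : ∀ a ∈ S, ∀ b ∈ S, a * b ∈ S := fun a ha b hb ↦ by
    refine map_mem_closure₂ continuous_mul ha hb ?_
    rintro _ ⟨n, rfl⟩ _ ⟨m, rfl⟩
    exact ⟨n + m + 1, by ring⟩
  obtain ⟨e, heS, he⟩ := exists_idempotent_in_compact_subsemigroup continuous_mul_const S
    ⟨x ^ 1, subset_closure ⟨0, rfl⟩⟩ isClosed_closure.isCompact hS_mul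
  rcases IsIdempotentElem.iff_eq_zero_or_one.mp he with rfl | rfl
  · exact .inr (tendsto_pow_atTop_nhds_zero_of_zero_mem_closure heS)
  · have hS_sub : S ⊆ range (x * ·) := closure_minimal
      (by rintro _ ⟨n, rfl⟩; exact ⟨x ^ n, by ring⟩)
      (isCompact_range (continuous_const_mul x)).isClosed
    obtain ⟨y, hy⟩ := hS_sub heS
    exact .inl (IsUnit.of_mul_eq_one y hy)

theorem isUnit_one_sub_of_tendsto_pow [T2Space R] {x : R} (hx : Tendsto (x ^ ·) atTop (𝓝 0)) :
    IsUnit (1 - x) := by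
  obtain ⟨y, hy⟩ := exists_clusterPt_of_compactSpace
    (map (fun n ↦ ∑ i ∈ Finset.range n, x ^ i) atTop)
  have hlim : Tendsto (fun n ↦ (∑ i ∈ Finset.range n, x ^ i) * (1 - x)) atTop (𝓝 1) := by
    simpa [geom_sum_mul_neg] using tendsto_const_nhds.sub hx
  have hy' : MapClusterPt (y * (1 - x)) atTop
      (fun n ↦ (∑ i ∈ Finset.range n, x ^ i) * (1 - x)) :=
    (continuous_mul_const (1 - x)).continuousAt.mapClusterPt hy
  exact IsUnit.of_mul_eq_one_right _ (eq_of_nhds_neBot (ClusterPt.mono hy' hlim))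

theorem eventually_isUnit_one_add [T2Space R] [IsDomain R] :
    ∀ᶠ ε in 𝓝 (0 : R), IsUnit (1 + ε) := by
  have hunits : IsClosed {u : R | IsUnit u} := by
    have : {u : R | IsUnit u} = Prod.fst '' {p : R × R | p.1 * p.2 = 1} := by
      ext u
      simp [isUnit_iff_exists_inv]
    rw [this]
    exact ((isClosed_eq continuous_mul continuous_const).isCompact.image continuous_fst).isClosed
  have hneg : ∀ᶠ ε in 𝓝 (0 : R), ¬IsUnit (-ε) :=
    (continuous_neg.tendsto' 0 0 neg_zero).eventually
      (hunits.isOpen_compl.mem_nhds (by simp))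
  filter_upwards [hneg] with ε hε
  simpa using isUnit_one_sub_of_tendsto_pow
    ((isUnit_or_tendsto_pow_atTop_nhds_zero (-ε)).resolve_left hε)

end CompactRing

theorem AddSubgroup.eventually_mem_coset_imp_eq_zero {G : Type*} [AddCommGroup G]
    [TopologicalSpace G] [IsTopologicalAddGroup G] [T2Space G] (L : AddSubgroup G)
    [DiscreteTopology L] (ℓ : G) :
    ∀ᶠ x in 𝓝 (0 : G), (∃ l ∈ L, x = ℓ + l) → x = 0 := by
  by_cases hℓ : ℓ ∈ L
  · obtain ⟨D, hD, hDL⟩ := nhds_inter_eq_singleton_of_mem_discrete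
      (isDiscrete_iff_discreteTopology.mpr ‹_›) L.zero_mem
    filter_upwards [hD] with x hx
    rintro ⟨l, hl, rfl⟩
    exact hDL.subset ⟨hx, L.add_mem hℓ hl⟩
  · have hcompl : ∀ᶠ x in 𝓝 (0 : G), -ℓ + x ∉ L :=
      ((continuous_const_add (-ℓ)).tendsto' 0 (-ℓ) (add_zero _)).eventually
        (L.isClosed_of_discrete.isOpen_compl.mem_nhds (by simpa using hℓ))
    filter_upwards [hcompl] with x hx
    rintro ⟨l, hl, rfl⟩
    simp [hl] at hx

section LocalField

variable {k : Type*} [Field k] [TopologicalSpace k] [IsTopologicalRing k] {O : Subring k}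

theorem Subring.eventually_one_add_mem_and_exists_mul_eq_one [T2Space k]
    (hOc : IsCompact (O : Set k)) (hOo : IsOpen (O : Set k)) :
    ∀ᶠ ε in 𝓝 (0 : k), 1 + ε ∈ O ∧ ∃ v ∈ O, (1 + ε) * v = 1 := by
  have : CompactSpace O := isCompact_iff_compactSpace.mp hOc
  rw [← O.coe_zero, ← hOo.isOpenEmbedding_subtypeVal.map_nhds_eq, eventually_map]
  filter_upwards [eventually_isUnit_one_add (R := O)] with ε hε
  obtain ⟨v, hv⟩ := hε.exists_right_inv
  exact ⟨(1 + ε).2, v, v.2, by simpa using congrArg Subtype.val hv⟩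

theorem Subring.eventually_mem_one_add_mul_affine_iff [T2Space k]
    (hOc : IsCompact (O : Set k)) (hOo : IsOpen (O : Set k)) {r : k} (hr : r ≠ 0) (w : k) :
    ∀ᶠ ε in 𝓝 (0 : k), ∀ x,
      (∃ u ∈ O, x = (1 + ε) * (w + r * u)) ↔ ∃ u ∈ O, x = w + r * u := by
  have hshift : ∀ᶠ ε in 𝓝 (0 : k), r⁻¹ * (ε * w) ∈ O :=
    ((by fun_prop : Continuous fun ε : k ↦ r⁻¹ * (ε * w)).tendsto' 0 0 (by simp)).eventually
      (hOo.mem_nhds O.zero_mem)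
  filter_upwards [eventually_one_add_mem_and_exists_mul_eq_one hOc hOo, hshift]
    with ε ⟨hε, v, hv, hεv⟩ hc x
  have hrc : r * (r⁻¹ * (ε * w)) = ε * w := mul_inv_cancel_left₀ hr _
  constructor
  · rintro ⟨u, hu, rfl⟩
    exact ⟨_, O.add_mem hc (O.mul_mem hε hu), by linear_combination -hrc⟩
  · rintro ⟨u, hu, rfl⟩
    refine ⟨v * (u - r⁻¹ * (ε * w)), O.mul_mem hv (O.sub_mem hu hc), ?_⟩
    linear_combination (-(r * (u - r⁻¹ * (ε * w)))) * hεv + hrc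

theorem Subring.eventually_mem_mul_affine_iff [T2Space k]
    (hOc : IsCompact (O : Set k)) (hOo : IsOpen (O : Set k)) {r : k} (hr : r ≠ 0) (w : k)
    {a : k} (ha : a ≠ 0) :
    ∀ᶠ b in 𝓝 a, ∀ x,
      (∃ u ∈ O, x = b * (w + r * u)) ↔ ∃ u ∈ O, x = a * (w + r * u) := by
  have hnhds : 𝓝 a = Filter.map (fun ε ↦ a * (1 + ε)) (𝓝 0) := by
    have h := ((Homeomorph.addLeft (1 : k)).trans (Homeomorph.mulLeft₀ a ha)).map_nhds_eq 0
    simp only [Homeomorph.trans_apply, Homeomorph.coe_addLeft, Homeomorph.coe_mulLeft₀, add_zero,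
      mul_one] at h
    exact h.symm
  rw [hnhds, eventually_map]
  filter_upwards [eventually_mem_one_add_mul_affine_iff hOc hOo hr w] with ε hε x
  simpa only [inv_mul_eq_iff_eq_mul₀ ha, mul_assoc] using hε (a⁻¹ * x)

theorem eventually_coset_inter_mul_affine_eq [T2Space k] (L : AddSubgroup k)
    [DiscreteTopology L] (ℓ w r : k) (hOc : IsCompact (O : Set k)) :
    ∀ᶠ a in 𝓝 (0 : k), a ≠ 0 →
      {x : k | (∃ l ∈ L, x = ℓ + l) ∧ ∃ u ∈ O, x = a * (w + r * u)} =
        {x | x = 0 ∧ ℓ ∈ L ∧ ∃ u ∈ O, (0 : k) = w + r * u} := by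
  have hC : IsCompact ((fun u ↦ w + r * u) '' O) := hOc.image (by fun_prop)
  filter_upwards [hC.eventually_forall_mul_mem (L.eventually_mem_coset_imp_eq_zero ℓ)]
    with a hsmall ha0
  ext x
  constructor
  · rintro ⟨⟨l, hl, hxl⟩, u, hu, rfl⟩
    have hx0 := hsmall _ ⟨u, hu, rfl⟩ ⟨l, hl, hxl⟩
    refine ⟨hx0, ?_, u, hu, (mul_eq_zero.mp hx0).resolve_left ha0 |>.symm⟩
    exact (add_mem_cancel_right hl).mp (by rw [← hxl, hx0]; exact L.zero_mem)
  · rintro ⟨rfl, hℓ, u, hu, h0⟩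
    exact ⟨⟨-ℓ, L.neg_mem hℓ, by simp⟩, u, hu, by rw [← h0, mul_zero]⟩

end LocalField

theorem stmt15_general (k : Type*) [Field k] [TopologicalSpace k] [IsTopologicalRing k]
    [T2Space k]
    (L : AddSubgroup k) [DiscreteTopology L]
    (O : Subring k) (hOc : IsCompact (O : Set k)) (hOo : IsOpen (O : Set k))
    (ℓ w r : k) (hr : r ≠ 0)
    (count : k → ℕ)
    (hcount : ∀ a : k, count a =
      Nat.card ↥{x : k | (∃ l ∈ L, x = ℓ + l) ∧ ∃ u ∈ O, x = a * (w + r * u)}) :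
    (∀ a : k, a ≠ 0 → ∃ U ∈ nhds a, ∀ b ∈ U, b ≠ 0 → count b = count a) ∧
    (∃ U ∈ nhds (0 : k), ∀ a ∈ U, a ≠ 0 →
      ((ℓ ∈ L ∧ ∃ u ∈ O, (0 : k) = w + r * u) → count a = 1) ∧
      (¬(ℓ ∈ L ∧ ∃ u ∈ O, (0 : k) = w + r * u) → count a = 0)) := by
  refine ⟨fun a ha ↦ ?_, ?_⟩
  · obtain ⟨U, hU, hUa⟩ := (O.eventually_mem_mul_affine_iff hOc hOo hr w ha).exists_mem
    exact ⟨U, hU, fun b hb _ ↦ by simp only [hcount, hUa b hb]⟩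
  · obtain ⟨U, hU, hUa⟩ := (eventually_coset_inter_mul_affine_eq L ℓ w r hOc).exists_mem
    refine ⟨U, hU, fun a ha ha0 ↦ ⟨fun h ↦ ?_, fun h ↦ ?_⟩⟩ <;>
      simp [hcount, hUa a ha ha0, h]

/-- In a local field `k` of characteristic `p > 0` (modeled as a Hausdorff topological
field of characteristic `p` with compact open maximal subring `𝒪`), for a discrete
cocompact additive subgroup `L`, `ℓ, w ∈ k`, `r ∈ k^×`, the counting function
`a ↦ #((ℓ + L) ∩ a(w + r𝒪))` on `k^×` is locally constant, and for `‖a‖` sufficiently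
small (i.e. for all nonzero `a` in a sufficiently small neighborhood of `0`) it equals
`1` if `ℓ ∈ L` and `0 ∈ w + r𝒪`, and `0` otherwise. -/
theorem stmt15 (k : Type*) (p : ℕ) [Field k] [TopologicalSpace k] [IsTopologicalRing k]
    [T2Space k] (hp : p.Prime) [CharP k p]
    (L : AddSubgroup k) [DiscreteTopology L] [CompactSpace (k ⧸ L)]
    (O : Subring k) (hOc : IsCompact (O : Set k)) (hOo : IsOpen (O : Set k))
    (ℓ w r : k) (hr : r ≠ 0)
    (count : k → ℕ)
    (hcount : ∀ a : k, count a =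
      Nat.card ↥{x : k | (∃ l ∈ L, x = ℓ + l) ∧ ∃ u ∈ O, x = a * (w + r * u)}) :
    (∀ a : k, a ≠ 0 → ∃ U ∈ nhds a, ∀ b ∈ U, b ≠ 0 → count b = count a) ∧
    (∃ U ∈ nhds (0 : k), ∀ a ∈ U, a ≠ 0 →
      ((ℓ ∈ L ∧ ∃ u ∈ O, (0 : k) = w + r * u) → count a = 1) ∧
      (¬(ℓ ∈ L ∧ ∃ u ∈ O, (0 : k) = w + r * u) → count a = 0)) :=
  stmt15_general k L O hOc hOo ℓ w r hr count hcount
end
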